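/- arXiv:1708.00721 — 8 statements merged into one kernel-verified Lean document; each statement's English description precedes it below -/
import Mathlib

section
/- In the composition construction, φ_x^p = 1, φ_y^q = 1 and (φ_x φ_y)^r = 1; consequently there is a unique group homomorphism φ : Δ(p,q,r) → Sym(𝒰) with φ(x) = φ_x and φ(y) = φ_y. -/
open Equiv

def triRels (p q r : ℕ) : Set (FreeGroup (Fin 2)) :=
  {FreeGroup.of 0 ^ p, FreeGroup.of 1 ^ q, (FreeGroup.of 0 * FreeGroup.of 1) ^ r}

/-- The triangle group `Δ(p,q,r) = ⟨x, y ∣ x^p = y^q = (xy)^r = 1⟩`. -/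
abbrev Tri (p q r : ℕ) := PresentedGroup (triRels p q r)

/-- The generator `x` of the triangle group. -/
def gx (p q r : ℕ) : Tri p q r := PresentedGroup.of 0

/-- The generator `y` of the triangle group. -/
def gy (p q r : ℕ) : Tri p q r := PresentedGroup.of 1

/-- `φ_x = π_1(x)⋯π_t(x) ∘ (a_1,…,a_p)(b_p,…,b_1)`. -/
def phiXgen (p q r t : ℕ) (𝒰 : Type) [DecidableEq 𝒰]
    (π : Fin t → (Tri p q r →* Equiv.Perm 𝒰)) (a b : Fin p → 𝒰) : Equiv.Perm 𝒰 :=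
  (List.ofFn fun i => π i (gx p q r)).prod * (List.ofFn a).formPerm *
    ((List.ofFn b).reverse).formPerm

/-- `φ_y = π_1(y)⋯π_t(y)`. -/
def phiYgen (p q r t : ℕ) (𝒰 : Type)
    (π : Fin t → (Tri p q r →* Equiv.Perm 𝒰)) : Equiv.Perm 𝒰 :=
  (List.ofFn fun i => π i (gy p q r)).prod

/-!
Since the `π_i` have disjoint supports covering `𝒰`, `Φ(g) = π_1(g)⋯π_t(g)` is a homomorphism, and
`φ_x = Φ(x) H`, `φ_y = Φ(y)` with `H = (a_1,…,a_p)(b_p,…,b_1)`. As `Φ(x)` fixes the handle points it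
commutes with `H`, whence `φ_x^p = Φ(x^p) H^p = 1`, and `φ_x φ_y = H g` with `g = Φ(xy)`.
Under `H g` the `g`-cycle of `a_i`, of length `s_i ∣ r`, is cut at `a_i` and `b_i = g^k a_i`: the
arc from `b_i` back to `a_i` is glued to the arc from `a_{i+1}` to `b_{i+1}`, giving a cycle of
length `(s_i - k) + k = s_i`. All other cycles of `H g` are cycles of `g`, so `(H g)^r = 1`.
-/

open Function

section DisjointProduct

variable {G α : Type*} [Group G]

theorem prod_map_apply_of_mem {ι : Type*} [DecidableEq ι] {Ω : ι → Set α}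
    (hdisj : Pairwise (Disjoint on Ω)) {σ : ι → Perm α}
    (hfix : ∀ i z, z ∉ Ω i → σ i z = z) (hstab : ∀ i z, z ∈ Ω i → σ i z ∈ Ω i)
    {l : List ι} (hl : l.Nodup) {i₀ : ι} {z : α} (hz : z ∈ Ω i₀) :
    (l.map σ).prod z = if i₀ ∈ l then σ i₀ z else z := by
  induction l with
  | nil => simp
  | cons i l ih =>
    obtain ⟨hil, hl⟩ := List.nodup_cons.mp hl
    rw [List.map_cons, List.prod_cons, Perm.mul_apply, ih hl]
    by_cases hi : i = i₀
    · subst hi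
      simp [hil]
    · have hfix₀ : ∀ w ∈ Ω i₀, σ i w = w := fun w hw =>
        hfix i w fun hwi => Set.disjoint_left.mp (hdisj hi) hwi hw
      by_cases hi₀ : i₀ ∈ l
      · simp [hi₀, hfix₀ _ (hstab i₀ z hz)]
      · simp [hi₀, Ne.symm hi, hfix₀ z hz]

variable {t : ℕ} {Ω : Fin t → Set α} {π : Fin t → G →* Perm α}

theorem prod_ofFn_apply_of_mem (hdisj : Pairwise (Disjoint on Ω))
    (hfix : ∀ i g z, z ∉ Ω i → π i g z = z) (hstab : ∀ i g z, z ∈ Ω i → π i g z ∈ Ω i)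
    (g : G) {i : Fin t} {z : α} (hz : z ∈ Ω i) :
    (List.ofFn fun i => π i g).prod z = π i g z := by
  rw [List.ofFn_eq_map, prod_map_apply_of_mem hdisj (fun i => hfix i g) (fun i => hstab i g)
    (List.nodup_finRange t) hz, if_pos (List.mem_finRange i)]

theorem prod_ofFn_mul (hdisj : Pairwise (Disjoint on Ω))
    (hfix : ∀ i g z, z ∉ Ω i → π i g z = z) (hstab : ∀ i g z, z ∈ Ω i → π i g z ∈ Ω i)
    (hcover : ⋃ i, Ω i = Set.univ) (g h : G) :
    (List.ofFn fun i => π i (g * h)).prod =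
      (List.ofFn fun i => π i g).prod * (List.ofFn fun i => π i h).prod := by
  ext z
  obtain ⟨i, hz⟩ := Set.mem_iUnion.mp (hcover.symm ▸ Set.mem_univ z)
  rw [Perm.mul_apply, prod_ofFn_apply_of_mem hdisj hfix hstab (g * h) hz,
    prod_ofFn_apply_of_mem hdisj hfix hstab h hz,
    prod_ofFn_apply_of_mem hdisj hfix hstab g (hstab i h z hz), map_mul, Perm.mul_apply]

def prodHom (hdisj : Pairwise (Disjoint on Ω))
    (hfix : ∀ i g z, z ∉ Ω i → π i g z = z) (hstab : ∀ i g z, z ∈ Ω i → π i g z ∈ Ω i)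
    (hcover : ⋃ i, Ω i = Set.univ) : G →* Perm α :=
  MonoidHom.mk' (fun g => (List.ofFn fun i => π i g).prod) (prod_ofFn_mul hdisj hfix hstab hcover)

theorem prodHom_zpow_apply_of_mem (hdisj : Pairwise (Disjoint on Ω))
    (hfix : ∀ i g z, z ∉ Ω i → π i g z = z) (hstab : ∀ i g z, z ∈ Ω i → π i g z ∈ Ω i)
    (hcover : ⋃ i, Ω i = Set.univ) (g : G) {i : Fin t} {z : α} (hz : z ∈ Ω i) (n : ℤ) :
    (prodHom hdisj hfix hstab hcover g ^ n) z = (π i g ^ n) z := by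
  rw [← map_zpow, ← map_zpow]
  exact prod_ofFn_apply_of_mem hdisj hfix hstab _ hz

end DisjointProduct

namespace List

variable {α : Type*} [DecidableEq α]

theorem formPerm_ofFn_apply {n : ℕ} {a : Fin n → α} (ha : Injective a) (i : Fin n) :
    (ofFn a).formPerm (a i) = a (finRotate n i) := by
  have := i.neZero
  have hi : (i : ℕ) < (ofFn a).length := by simp
  have happly := formPerm_apply_getElem _ (nodup_ofFn.mpr ha) i hi
  simp only [List.getElem_ofFn, length_ofFn] at happly
  rw [happly, finRotate_apply]
  congr 1
  ext
  simp [Fin.val_add]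

theorem formPerm_reverse_ofFn_apply {n : ℕ} {b : Fin n → α} (hb : Injective b) (i : Fin n) :
    (ofFn b).reverse.formPerm (b (finRotate n i)) = b i := by
  rw [formPerm_reverse, Perm.inv_eq_iff_eq, formPerm_ofFn_apply hb]

theorem formPerm_ofFn_pow {n : ℕ} {a : Fin n → α} (ha : Injective a) :
    (ofFn a).formPerm ^ n = 1 := by
  simpa using formPerm_pow_length_eq_one_of_nodup _ (nodup_ofFn.mpr ha)

end List

namespace Equiv.Perm

variable {α : Type*} {f : Perm α} {x y : α}

theorem disjoint_formPerm_of_forall_mem [DecidableEq α] {σ : Perm α} {l : List α}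
    (h : ∀ x ∈ l, σ x = x) : σ.Disjoint l.formPerm := by
  intro x
  by_cases hx : x ∈ l
  · exact Or.inl (h x hx)
  · exact Or.inr (List.formPerm_apply_of_notMem hx)

theorem nat_card_setOf_sameCycle [Finite α] (f : Perm α) (x : α) :
    Nat.card {y | f.SameCycle x y} = minimalPeriod f x := by
  classical
  have := Fintype.ofFinite α
  have horbit : {y | f.SameCycle x y} = MulAction.orbit (Subgroup.zpowers f) x := by
    ext y
    exact (Subgroup.exists_zpowers (x := f) (p := fun g => g • x = y)).symm
  rw [horbit, Nat.card_eq_fintype_card, ← MulAction.minimalPeriod_eq_card]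
  rfl

theorem pow_apply_injOn_Iio_minimalPeriod :
    Set.InjOn (fun n : ℕ => (f ^ n) x) (Set.Iio (minimalPeriod f x)) := by
  simpa only [← Perm.iterate_eq_pow] using iterate_injOn_Iio_minimalPeriod

theorem SameCycle.exists_pow_lt_minimalPeriod (h : f.SameCycle x y)
    (hx : 0 < minimalPeriod f x) : ∃ m < minimalPeriod f x, (f ^ m) x = y := by
  obtain ⟨n, rfl⟩ := h
  have hlt := Int.emod_lt_of_pos n (Int.natCast_pos.mpr hx)
  have hnonneg := Int.emod_nonneg n (Int.natCast_pos.mpr hx).ne'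
  refine ⟨(n % (minimalPeriod f x : ℤ)).toNat, by omega, ?_⟩
  rw [← zpow_natCast, Int.toNat_of_nonneg hnonneg]
  exact MulAction.zpow_smul_mod_minimalPeriod f x n

theorem SameCycle.pow_apply_eq_self {n : ℕ} (h : f.SameCycle x y)
    (hx : (f ^ n) x = x) : (f ^ n) y = y := by
  obtain ⟨m, rfl⟩ := h
  rw [← Perm.mul_apply, ((Commute.refl f).pow_left n).zpow_right m |>.eq, Perm.mul_apply, hx]

end Equiv.Perm

section Gluing

variable {α ι : Type*} {g C : Perm α} {z : α} {m n : ℕ}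

theorem mul_pow_apply_eq_pow_apply (hC : ∀ m, 0 < m → m < n → C ((g ^ m) z) = (g ^ m) z)
    (hm : m < n) : ((C * g) ^ m) z = (g ^ m) z := by
  induction m with
  | zero => rfl
  | succ m ih =>
    rw [pow_succ', Perm.mul_apply, ih (by omega), Perm.mul_apply, ← Perm.mul_apply g,
      ← pow_succ', hC _ m.succ_pos hm]

theorem mul_pow_apply_eq_apply_pow_apply (hC : ∀ m, 0 < m → m < n → C ((g ^ m) z) = (g ^ m) z)
    (hn : 0 < n) : ((C * g) ^ n) z = C ((g ^ n) z) := by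
  obtain ⟨n, rfl⟩ := Nat.exists_eq_add_one_of_ne_zero hn.ne'
  rw [pow_succ', Perm.mul_apply, mul_pow_apply_eq_pow_apply hC n.lt_succ_self, Perm.mul_apply,
    ← Perm.mul_apply g, ← pow_succ']

/-- Abstracts the composition construction: `g = Φ(xy)`, the handles `[a i, b i]`, and
`C = (a_1,…,a_p)(b_p,…,b_1)` with `ν` the cyclic successor of indices, so that `φ_x φ_y = C * g`. -/
structure IsHandleGluing (g C : Perm α) (a b : ι → α) (ν : Perm ι) (k : ℕ) : Prop where
  pos : 0 < k
  pow_apply : ∀ i, (g ^ k) (a i) = b i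
  lt_minimalPeriod : ∀ i, k < minimalPeriod g (a i)
  apply_a : ∀ i, C (a i) = a (ν i)
  apply_b : ∀ i, C (b (ν i)) = b i
  apply_of_forall_ne : ∀ w, (∀ i, w ≠ a i) → (∀ i, w ≠ b i) → C w = w
  eq_of_sameCycle_a : ∀ i i', g.SameCycle (a i) (a i') → i' = i
  eq_of_sameCycle_b : ∀ i i', g.SameCycle (a i) (b i') → i' = i

namespace IsHandleGluing

variable {a b : ι → α} {ν : Perm ι} {k : ℕ}

theorem apply_pow_apply_of_ne (h : IsHandleGluing g C a b ν k) {i : ι} (hm : 0 < m)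
    (hms : m < minimalPeriod g (a i)) (hmk : m ≠ k) : C ((g ^ m) (a i)) = (g ^ m) (a i) := by
  have hks := h.lt_minimalPeriod i
  refine h.apply_of_forall_ne _ (fun i' hi' => ?_) (fun i' hi' => ?_)
  · have hcyc : (g ^ m) (a i) = (g ^ 0) (a i) := by
      rw [hi', h.eq_of_sameCycle_a i i' ⟨m, by rw [zpow_natCast, hi']⟩, pow_zero]
      rfl
    have := Perm.pow_apply_injOn_Iio_minimalPeriod hms (show 0 < _ by omega) hcyc
    omega
  · refine hmk (Perm.pow_apply_injOn_Iio_minimalPeriod hms hks ?_)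
    show (g ^ m) (a i) = (g ^ k) (a i)
    rw [hi', h.eq_of_sameCycle_b i i' ⟨m, by rw [zpow_natCast, hi']⟩, h.pow_apply]

theorem pow_apply_b (h : IsHandleGluing g C a b ν k) (i : ι) (m : ℕ) :
    (g ^ m) (b i) = (g ^ (m + k)) (a i) := by
  rw [← h.pow_apply i, ← Perm.mul_apply, ← pow_add]

theorem apply_pow_apply_b (h : IsHandleGluing g C a b ν k) (i : ι) :
    ∀ m, 0 < m → m < minimalPeriod g (a i) - k → C ((g ^ m) (b i)) = (g ^ m) (b i) := by
  intro m hm hms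
  rw [h.pow_apply_b]
  exact h.apply_pow_apply_of_ne (by omega) (by omega) (by omega)

theorem mul_pow_apply_a (h : IsHandleGluing g C a b ν k) (i : ι) :
    ((C * g) ^ k) (a (ν i)) = b i := by
  rw [mul_pow_apply_eq_apply_pow_apply (fun m hm hmk => h.apply_pow_apply_of_ne hm
      (hmk.trans (h.lt_minimalPeriod _)) hmk.ne) h.pos, h.pow_apply, h.apply_b]

theorem mul_pow_apply_b (h : IsHandleGluing g C a b ν k) (i : ι) :
    ((C * g) ^ (minimalPeriod g (a i) - k)) (b i) = a (ν i) := by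
  have hks := h.lt_minimalPeriod i
  rw [mul_pow_apply_eq_apply_pow_apply (h.apply_pow_apply_b i) (by omega), h.pow_apply_b,
    Nat.sub_add_cancel hks.le, ← Perm.iterate_eq_pow, iterate_minimalPeriod, h.apply_a]

theorem mul_pow_apply_b_of_pow_eq_one (h : IsHandleGluing g C a b ν k) {r : ℕ} (hr : g ^ r = 1)
    (i : ι) : ((C * g) ^ r) (b i) = b i := by
  have hcycle : ((C * g) ^ minimalPeriod g (a i)) (b i) = b i := by
    rw [← Nat.add_sub_cancel' (h.lt_minimalPeriod i).le, pow_add, Perm.mul_apply,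
      h.mul_pow_apply_b, h.mul_pow_apply_a]
  have hdvd : minimalPeriod g (a i) ∣ r :=
    IsPeriodicPt.minimalPeriod_dvd (by rw [IsPeriodicPt, IsFixedPt, Perm.iterate_eq_pow, hr]; rfl)
  obtain ⟨c, rfl⟩ := hdvd
  rw [pow_mul]
  exact Perm.pow_apply_eq_self_of_apply_eq_self hcycle c

theorem mul_pow_apply_a_of_pow_eq_one (h : IsHandleGluing g C a b ν k) {r : ℕ} (hr : g ^ r = 1)
    (i : ι) : ((C * g) ^ r) (a i) = a i := by
  obtain ⟨i, rfl⟩ := ν.surjective i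
  have hcyc : (C * g).SameCycle (b i) (a (ν i)) :=
    ⟨(minimalPeriod g (a i) - k : ℕ), by rw [zpow_natCast, h.mul_pow_apply_b]⟩
  exact hcyc.pow_apply_eq_self (h.mul_pow_apply_b_of_pow_eq_one hr i)

theorem sameCycle_mul_of_sameCycle (h : IsHandleGluing g C a b ν k) {i : ι}
    (hz : g.SameCycle (a i) z) : (C * g).SameCycle (a i) z ∨ (C * g).SameCycle (b i) z := by
  have hks := h.lt_minimalPeriod i
  obtain ⟨m, hms, rfl⟩ := hz.exists_pow_lt_minimalPeriod (by omega)
  by_cases hmk : m < k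
  · refine Or.inl ⟨m, ?_⟩
    rw [zpow_natCast]
    exact mul_pow_apply_eq_pow_apply (fun m hm hmk => h.apply_pow_apply_of_ne hm
      (hmk.trans hks) hmk.ne) hmk
  · refine Or.inr ⟨(m - k : ℕ), ?_⟩
    rw [zpow_natCast, mul_pow_apply_eq_pow_apply (h.apply_pow_apply_b i) (by omega : m - k < _),
      h.pow_apply_b, Nat.sub_add_cancel (not_lt.mp hmk)]

theorem mul_pow_apply_of_not_sameCycle (h : IsHandleGluing g C a b ν k)
    (hz : ∀ i, ¬ g.SameCycle (a i) z) (n : ℕ) : ((C * g) ^ n) z = (g ^ n) z := by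
  refine mul_pow_apply_eq_pow_apply (fun m _ _ => h.apply_of_forall_ne _ ?_ ?_) n.lt_succ_self
  · refine fun i hi => hz i ((Perm.sameCycle_pow_right (n := m)).mp ?_)
    rw [hi]
  · refine fun i hi => hz i ((Perm.sameCycle_pow_right (n := m)).mp ?_)
    rw [hi, ← h.pow_apply i]
    exact Perm.sameCycle_pow_right.mpr .rfl

theorem mul_pow_eq_one (h : IsHandleGluing g C a b ν k) {r : ℕ} (hr : g ^ r = 1) :
    (C * g) ^ r = 1 := by
  ext z
  by_cases hz : ∃ i, g.SameCycle (a i) z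
  · obtain ⟨i, hi⟩ := hz
    rcases h.sameCycle_mul_of_sameCycle hi with hcyc | hcyc
    · exact hcyc.pow_apply_eq_self (h.mul_pow_apply_a_of_pow_eq_one hr i)
    · exact hcyc.pow_apply_eq_self (h.mul_pow_apply_b_of_pow_eq_one hr i)
  · rw [h.mul_pow_apply_of_not_sameCycle (not_exists.mp hz), hr]

end IsHandleGluing

end Gluing

section HandlePerm

variable {α : Type*} [DecidableEq α] {n : ℕ} {a b : Fin n → α}

/-- The permutation `(a_1, …, a_n)(b_n, …, b_1)` of the composition construction. -/
def handlePerm (a b : Fin n → α) : Perm α :=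
  (List.ofFn a).formPerm * (List.ofFn b).reverse.formPerm

theorem handlePerm_apply_a (hab : Injective (Sum.elim a b)) (i : Fin n) :
    handlePerm a b (a i) = a (finRotate n i) := by
  obtain ⟨ha, -, hne⟩ := Sum.elim_injective.mp hab
  have hi : a i ∉ (List.ofFn b).reverse := by
    simpa [List.mem_ofFn] using fun i' => (hne i i').symm
  rw [handlePerm, Perm.mul_apply, List.formPerm_apply_of_notMem hi, List.formPerm_ofFn_apply ha]

theorem handlePerm_apply_b (hab : Injective (Sum.elim a b)) (i : Fin n) :
    handlePerm a b (b (finRotate n i)) = b i := by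
  obtain ⟨-, hb, hne⟩ := Sum.elim_injective.mp hab
  have hi : b i ∉ List.ofFn a := by simpa [List.mem_ofFn] using fun i' => hne i' i
  rw [handlePerm, Perm.mul_apply, List.formPerm_reverse_ofFn_apply hb,
    List.formPerm_apply_of_notMem hi]

theorem handlePerm_apply_of_forall_ne {w : α} (ha : ∀ i, w ≠ a i) (hb : ∀ i, w ≠ b i) :
    handlePerm a b w = w := by
  have hwa : w ∉ List.ofFn a := by simpa [List.mem_ofFn, eq_comm] using ha
  have hwb : w ∉ (List.ofFn b).reverse := by simpa [List.mem_ofFn, eq_comm] using hb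
  rw [handlePerm, Perm.mul_apply, List.formPerm_apply_of_notMem hwb,
    List.formPerm_apply_of_notMem hwa]

theorem handlePerm_pow (hab : Injective (Sum.elim a b)) : handlePerm a b ^ n = 1 := by
  obtain ⟨ha, hb, hne⟩ := Sum.elim_injective.mp hab
  have hdisj : (List.ofFn a).formPerm.Disjoint (List.ofFn b).reverse.formPerm := by
    refine Perm.disjoint_formPerm_of_forall_mem fun w hwb =>
      List.formPerm_apply_of_notMem fun hwa => ?_
    simp only [List.mem_reverse, List.mem_ofFn] at hwa hwb
    obtain ⟨i, rfl⟩ := hwb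
    obtain ⟨i', hi'⟩ := hwa
    exact hne i' i hi'
  rw [handlePerm, hdisj.commute.mul_pow, List.formPerm_ofFn_pow ha, List.formPerm_reverse,
    inv_pow, List.formPerm_ofFn_pow hb, inv_one, one_mul]

theorem commute_handlePerm {X : Perm α} (hXa : ∀ i, X (a i) = a i) (hXb : ∀ i, X (b i) = b i) :
    Commute X (handlePerm a b) := by
  refine (Perm.disjoint_formPerm_of_forall_mem ?_).commute.mul_right
    (Perm.disjoint_formPerm_of_forall_mem ?_).commute
  · simpa [List.mem_ofFn] using hXa
  · simpa [List.mem_ofFn] using hXb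

theorem isHandleGluing_handlePerm {g : Perm α} {k : ℕ} (hab : Injective (Sum.elim a b))
    (hk : 0 < k) (hpow : ∀ i, (g ^ k) (a i) = b i) (hks : ∀ i, k < minimalPeriod g (a i))
    (horb_a : ∀ i i', g.SameCycle (a i) (a i') → i' = i)
    (horb_b : ∀ i i', g.SameCycle (a i) (b i') → i' = i) :
    IsHandleGluing g (handlePerm a b) a b (finRotate n) k :=
  ⟨hk, hpow, hks, handlePerm_apply_a hab, handlePerm_apply_b hab,
    fun _ => handlePerm_apply_of_forall_ne, horb_a, horb_b⟩

end HandlePerm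

section TriangleGroup

variable {p q r : ℕ}

theorem gx_pow : gx p q r ^ p = 1 := by
  rw [gx, PresentedGroup.of, ← map_pow]
  exact PresentedGroup.one_of_mem (by simp [triRels])

theorem gy_pow : gy p q r ^ q = 1 := by
  rw [gy, PresentedGroup.of, ← map_pow]
  exact PresentedGroup.one_of_mem (by simp [triRels])

theorem gx_mul_gy_pow : (gx p q r * gy p q r) ^ r = 1 := by
  rw [gx, gy, PresentedGroup.of, PresentedGroup.of, ← map_mul, ← map_pow]
  exact PresentedGroup.one_of_mem (by simp [triRels])

theorem Tri.existsUnique_hom {H : Type*} [Group H] {X Y : H} (hX : X ^ p = 1) (hY : Y ^ q = 1)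
    (hXY : (X * Y) ^ r = 1) :
    ∃! φ : Tri p q r →* H, φ (gx p q r) = X ∧ φ (gy p q r) = Y := by
  have hrels : ∀ w ∈ triRels p q r, FreeGroup.lift ![X, Y] w = 1 := by
    rintro w (rfl | rfl | rfl) <;> simpa
  refine ⟨PresentedGroup.toGroup hrels, ⟨PresentedGroup.toGroup.of hrels,
    PresentedGroup.toGroup.of hrels⟩, fun φ ⟨hφx, hφy⟩ => PresentedGroup.ext fun i => ?_⟩
  fin_cases i
  · exact hφx.trans (PresentedGroup.toGroup.of hrels (x := 0)).symm
  · exact hφy.trans (PresentedGroup.toGroup.of hrels (x := 1)).symm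

end TriangleGroup

theorem composition_relations_and_hom_general
    (p q r t k : ℕ) (hk : 0 < k)
    (𝒰 : Type) [Fintype 𝒰] [DecidableEq 𝒰]
    (Ω : Fin t → Set 𝒰)
    (hdisj : Pairwise fun i i' => Disjoint (Ω i) (Ω i'))
    (hcover : (⋃ i, Ω i) = Set.univ)
    (π : Fin t → (Tri p q r →* Equiv.Perm 𝒰))
    (hfix : ∀ (i : Fin t) (g : Tri p q r) (z : 𝒰), z ∉ Ω i → π i g z = z)
    (hstab : ∀ (i : Fin t) (g : Tri p q r) (z : 𝒰), z ∈ Ω i → π i g z ∈ Ω i)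
    (j : Fin p → Fin t)
    (a b : Fin p → 𝒰)
    (hmem : ∀ i, a i ∈ Ω (j i) ∧ b i ∈ Ω (j i))
    (hax : ∀ i, π (j i) (gx p q r) (a i) = a i)
    (hbx : ∀ i, π (j i) (gx p q r) (b i) = b i)
    (hhandle : ∀ i, ((π (j i) (gx p q r * gy p q r)) ^ k) (a i) = b i)
    (hdistinct : Function.Injective (Sum.elim a b))
    (horb_a : ∀ (i i' : Fin p) (n : ℤ),
      ((π (j i) (gx p q r * gy p q r)) ^ n) (a i) = a i' → i' = i)
    (horb_b : ∀ (i i' : Fin p) (n : ℤ),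
      ((π (j i) (gx p q r * gy p q r)) ^ n) (a i) = b i' → i' = i)
    (hks : ∀ i, k <
      Nat.card {w : 𝒰 | ∃ n : ℤ, ((π (j i) (gx p q r * gy p q r)) ^ n) (a i) = w}) :
    (phiXgen p q r t 𝒰 π a b) ^ p = 1 ∧
    (phiYgen p q r t 𝒰 π) ^ q = 1 ∧
    (phiXgen p q r t 𝒰 π a b * phiYgen p q r t 𝒰 π) ^ r = 1 ∧
    ∃! φ : Tri p q r →* Equiv.Perm 𝒰,
      φ (gx p q r) = phiXgen p q r t 𝒰 π a b ∧
      φ (gy p q r) = phiYgen p q r t 𝒰 π := by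
  set Φ := prodHom hdisj hfix hstab hcover
  have hΦ : ∀ i g (n : ℤ), (Φ g ^ n) (a i) = (π (j i) g ^ n) (a i) := fun i g =>
    prodHom_zpow_apply_of_mem hdisj hfix hstab hcover g (hmem i).1
  have hcomm : Commute (Φ (gx p q r)) (handlePerm a b) := commute_handlePerm
    (fun i => (prod_ofFn_apply_of_mem hdisj hfix hstab _ (hmem i).1).trans (hax i))
    (fun i => (prod_ofFn_apply_of_mem hdisj hfix hstab _ (hmem i).2).trans (hbx i))
  have hφx : phiXgen p q r t 𝒰 π a b = Φ (gx p q r) * handlePerm a b := mul_assoc _ _ _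
  have hx : phiXgen p q r t 𝒰 π a b ^ p = 1 := by
    rw [hφx, hcomm.mul_pow, ← map_pow, gx_pow, map_one, one_mul, handlePerm_pow hdistinct]
  have hφy : phiYgen p q r t 𝒰 π = Φ (gy p q r) := rfl
  have hy : phiYgen p q r t 𝒰 π ^ q = 1 := by rw [hφy, ← map_pow, gy_pow, map_one]
  have hcyc : ∀ i w, (Φ (gx p q r * gy p q r)).SameCycle (a i) w ↔
      (π (j i) (gx p q r * gy p q r)).SameCycle (a i) w := fun i w =>
    exists_congr fun n => by rw [hΦ]
  have hglue : IsHandleGluing (Φ (gx p q r * gy p q r)) (handlePerm a b) a b (finRotate p) k := by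
    refine isHandleGluing_handlePerm hdistinct hk (fun i => ?_) (fun i => ?_)
      (fun i i' hc => ((hcyc i _).mp hc).elim (horb_a i i'))
      (fun i i' hc => ((hcyc i _).mp hc).elim (horb_b i i'))
    · rw [← zpow_natCast, hΦ, zpow_natCast, hhandle]
    · rw [← Perm.nat_card_setOf_sameCycle]
      simp only [hcyc]
      exact hks i
  have hxy : (phiXgen p q r t 𝒰 π a b * phiYgen p q r t 𝒰 π) ^ r = 1 := by
    rw [hφx, hcomm.eq, mul_assoc, hφy, ← map_mul]
    exact hglue.mul_pow_eq_one (by rw [← map_pow, gx_mul_gy_pow, map_one])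
  exact ⟨hx, hy, hxy, Tri.existsUnique_hom hx hy hxy⟩

theorem composition_relations_and_hom
    (p q r t k : ℕ) (hq : 0 < q) (hr : 0 < r) (ht : 0 < t) (htp : t ≤ p) (hk : 0 < k)
    (𝒰 : Type) [Fintype 𝒰] [DecidableEq 𝒰]
    (Ω : Fin t → Set 𝒰)
    (hdisj : Pairwise fun i i' => Disjoint (Ω i) (Ω i'))
    (hcover : (⋃ i, Ω i) = Set.univ)
    (π : Fin t → (Tri p q r →* Equiv.Perm 𝒰))
    (hfix : ∀ (i : Fin t) (g : Tri p q r) (z : 𝒰), z ∉ Ω i → π i g z = z)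
    (hstab : ∀ (i : Fin t) (g : Tri p q r) (z : 𝒰), z ∈ Ω i → π i g z ∈ Ω i)
    (htrans : ∀ i : Fin t, ∀ z ∈ Ω i, ∀ z' ∈ Ω i, ∃ g : Tri p q r, π i g z = z')
    (j : Fin p → Fin t) (hjsurj : Function.Surjective j)
    (a b : Fin p → 𝒰)
    (hmem : ∀ i, a i ∈ Ω (j i) ∧ b i ∈ Ω (j i))
    (hax : ∀ i, π (j i) (gx p q r) (a i) = a i)
    (hbx : ∀ i, π (j i) (gx p q r) (b i) = b i)
    (hhandle : ∀ i, ((π (j i) (gx p q r * gy p q r)) ^ k) (a i) = b i)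
    (hdistinct : Function.Injective (Sum.elim a b))
    (horb_a : ∀ (i i' : Fin p) (n : ℤ),
      ((π (j i) (gx p q r * gy p q r)) ^ n) (a i) = a i' → i' = i)
    (horb_b : ∀ (i i' : Fin p) (n : ℤ),
      ((π (j i) (gx p q r * gy p q r)) ^ n) (a i) = b i' → i' = i)
    (hks : ∀ i, k <
      Nat.card {w : 𝒰 | ∃ n : ℤ, ((π (j i) (gx p q r * gy p q r)) ^ n) (a i) = w}) :
    (phiXgen p q r t 𝒰 π a b) ^ p = 1 ∧
    (phiYgen p q r t 𝒰 π) ^ q = 1 ∧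
    (phiXgen p q r t 𝒰 π a b * phiYgen p q r t 𝒰 π) ^ r = 1 ∧
    ∃! φ : Tri p q r →* Equiv.Perm 𝒰,
      φ (gx p q r) = phiXgen p q r t 𝒰 π a b ∧
      φ (gy p q r) = phiYgen p q r t 𝒰 π :=
  composition_relations_and_hom_general p q r t k hk 𝒰 Ω hdisj hcover π hfix hstab j a b hmem hax
    hbx hhandle hdistinct horb_a horb_b hks
end

section
/- In the composition construction, the subgroup ⟨φ_x, φ_y⟩ of Sym(𝒰) acts transitively on 𝒰; equivalently, the permutation representation φ of Δ(p,q,r) on 𝒰 determined by φ(x) = φ_x and φ(y) = φ_y is transitive. -/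
open Equiv

/-! Let `H = ⟨φ_x, φ_y⟩`. On `Ω_i`, `φ_y` agrees with `π_i(y)`, and `φ_x` agrees with `π_i(x)`
away from the handle points, which `π_i(x)` fixes; hence every `π_i(g)` moves each point only
within its `H`-orbit. Since `φ_x` maps `a_n` to `a_{n+1}`, all the `a_n` lie in one `H`-orbit,
and by transitivity of `π_{j_n}` so does every point of `Ω_{j_n}`; these blocks cover `𝒰`. -/

namespace Equiv.Perm

variable {α : Type*}

theorem apply_mem_of_forall_notMem_apply_eq (σ : Perm α) {S : Set α}
    (hσ : ∀ z ∉ S, σ z = z) {u : α} (hu : u ∈ S) : σ u ∈ S := by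
  by_contra h
  exact h (by rwa [σ.injective (hσ _ h)])

theorem list_prod_apply_eq_self {l : List (Perm α)} {v : α} (h : ∀ σ ∈ l, σ v = v) :
    l.prod v = v :=
  Subgroup.list_prod_mem (K := MulAction.stabilizer (Perm α) v) h

theorem prod_ofFn_apply_of_forall_ne {n : ℕ} (f : Fin n → Perm α) (i : Fin n) (u : α)
    (h : ∀ k ≠ i, f k u = u ∧ f k (f i u) = f i u) : (List.ofFn f).prod u = f i u := by
  induction n with
  | zero => exact i.elim0
  | succ n ih =>
    rw [List.ofFn_succ, List.prod_cons, mul_apply]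
    cases i using Fin.cases with
    | zero =>
      rw [list_prod_apply_eq_self]
      simpa using fun k => (h k.succ (Fin.succ_ne_zero k)).1
    | succ i =>
      rw [ih (fun k => f k.succ) i fun k hk => h k.succ (by simpa using hk)]
      exact (h 0 (Fin.succ_ne_zero i).symm).2

end Equiv.Perm

section Blocks

variable {α : Type*} {n : ℕ} {Ω : Fin n → Set α}

theorem prod_ofFn_perm_apply_of_mem (hΩ : Pairwise fun i i' => Disjoint (Ω i) (Ω i'))
    (f : Fin n → Perm α) (hf : ∀ i, ∀ z ∉ Ω i, f i z = z) {i : Fin n} {u : α} (hu : u ∈ Ω i) :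
    (List.ofFn f).prod u = f i u := by
  refine Equiv.Perm.prod_ofFn_apply_of_forall_ne f i u fun k hk => ?_
  have hki := Set.disjoint_right.mp (hΩ hk)
  exact ⟨hf k u (hki hu), hf k _ (hki ((f i).apply_mem_of_forall_notMem_apply_eq (hf i) hu))⟩

theorem apply_eq_self_of_apply_eq_self_of_mem (hΩ : Pairwise fun i i' => Disjoint (Ω i) (Ω i'))
    (f : Fin n → Perm α) (hf : ∀ i, ∀ z ∉ Ω i, f i z = z) {i : Fin n} {u : α} (hu : u ∈ Ω i)
    (hfu : f i u = u) (k : Fin n) : f k u = u := by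
  obtain rfl | hk := eq_or_ne k i
  · exact hfu
  · exact hf k u (Set.disjoint_right.mp (hΩ hk) hu)

end Blocks

section Orbits

open MulAction

variable {α : Type*} {H : Subgroup (Perm α)}

theorem orbit_perm_apply_of_mem {σ : Perm α} (hσ : σ ∈ H) (u : α) :
    orbit H (σ u) = orbit H u :=
  orbit_smul (⟨σ, hσ⟩ : H) u

theorem orbit_apply_eq_of_eqOn {σ τ : Perm α} {S : Set α} (hσ : σ ∈ H)
    (hτ : ∀ z ∉ S, τ z = z) (hστ : Set.EqOn σ τ S) (u : α) : orbit H (τ u) = orbit H u := by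
  by_cases hu : u ∈ S
  · rw [← hστ hu, orbit_perm_apply_of_mem hσ]
  · rw [hτ u hu]

theorem orbit_map_apply_of_closure_eq_top {G : Type*} [Group G] {s : Set G}
    (hs : Subgroup.closure s = ⊤) (ρ : G →* Perm α)
    (hρ : ∀ x ∈ s, ∀ u, orbit H (ρ x u) = orbit H u) (g : G) (u : α) :
    orbit H (ρ g u) = orbit H u := by
  have hg : g ∈ Subgroup.closure s := hs ▸ Subgroup.mem_top g
  induction hg using Subgroup.closure_induction generalizing u with
  | mem x hx => exact hρ x hx u
  | one => simp
  | mul g g' _ _ hg hg' => rw [map_mul, Perm.mul_apply, hg, hg']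
  | inv g _ hg =>
    rw [← hg (ρ g⁻¹ u), ← Perm.mul_apply, ← map_mul, mul_inv_cancel, map_one, Perm.one_apply]

end Orbits

theorem Fin.apply_eq_of_forall_succ_eq {β : Type*} {p : ℕ} (f : Fin p → β)
    (h : ∀ n (hn : n + 1 < p), f ⟨n + 1, hn⟩ = f ⟨n, by omega⟩) (m m' : Fin p) : f m = f m' := by
  suffices ∀ m : Fin p, f m = f ⟨0, m.pos⟩ by rw [this m, this m']
  rintro ⟨m, hm⟩
  induction m with
  | zero => rfl
  | succ m ih => rw [h m hm, ih]

theorem List.formPerm_ofFn_apply_of_lt {α : Type*} [DecidableEq α] {p : ℕ} {a : Fin p → α}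
    (ha : Function.Injective a) {n : ℕ} (hn : n + 1 < p) :
    (List.ofFn a).formPerm (a ⟨n, by omega⟩) = a ⟨n + 1, hn⟩ := by
  have := formPerm_apply_getElem (ofFn a) (nodup_ofFn.mpr ha) n (by simp; omega)
  simpa [Nat.mod_eq_of_lt hn] using this

theorem closure_gx_gy (p q r : ℕ) : Subgroup.closure {gx p q r, gy p q r} = ⊤ := by
  rw [← PresentedGroup.closure_range_of]
  congr
  ext
  simp [Fin.exists_fin_two, gx, gy, eq_comm]

section Composition

open MulAction

variable {p q r t : ℕ} {𝒰 : Type} [DecidableEq 𝒰] {π : Fin t → (Tri p q r →* Perm 𝒰)}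
  {a b : Fin p → 𝒰}

theorem phiXgen_apply_of_notMem {u : 𝒰} (hua : u ∉ Set.range a) (hub : u ∉ Set.range b) :
    phiXgen p q r t 𝒰 π a b u = (List.ofFn fun i => π i (gx p q r)).prod u := by
  have hb : List.formPerm (List.ofFn b).reverse u = u :=
    List.formPerm_apply_of_notMem (by simpa using hub)
  have ha : List.formPerm (List.ofFn a) u = u := List.formPerm_apply_of_notMem (by simpa using hua)
  rw [phiXgen, Perm.mul_apply, Perm.mul_apply, hb, ha]

theorem phiXgen_apply_succ (hab : Function.Injective (Sum.elim a b))
    (hfix : ∀ m, (List.ofFn fun i => π i (gx p q r)).prod (a m) = a m)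
    {n : ℕ} (hn : n + 1 < p) :
    phiXgen p q r t 𝒰 π a b (a ⟨n, by omega⟩) = a ⟨n + 1, hn⟩ := by
  have hb : List.formPerm (List.ofFn b).reverse (a ⟨n, by omega⟩) = a ⟨n, by omega⟩ :=
    List.formPerm_apply_of_notMem (by simpa using fun m => hab.ne Sum.inr_ne_inl)
  have ha : Function.Injective a := hab.comp Sum.inl_injective
  rw [phiXgen, Perm.mul_apply, Perm.mul_apply, hb, List.formPerm_ofFn_apply_of_lt ha, hfix]

theorem orbit_apply_gx_eq {Ω : Fin t → Set 𝒰} {j : Fin p → Fin t} {H : Subgroup (Perm 𝒰)}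
    (hφ : phiXgen p q r t 𝒰 π a b ∈ H) (hdisj : Pairwise fun i i' => Disjoint (Ω i) (Ω i'))
    (hfix : ∀ i, ∀ z ∉ Ω i, π i (gx p q r) z = z) (hmem : ∀ m, a m ∈ Ω (j m) ∧ b m ∈ Ω (j m))
    (hax : ∀ m, π (j m) (gx p q r) (a m) = a m) (hbx : ∀ m, π (j m) (gx p q r) (b m) = b m)
    (i : Fin t) (u : 𝒰) : orbit H (π i (gx p q r) u) = orbit H u := by
  refine orbit_apply_eq_of_eqOn (S := Ω i \ (Set.range a ∪ Set.range b)) hφ (fun z hz => ?_)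
    (fun z ⟨hzi, hz⟩ => ?_) u
  · by_cases hzi : z ∈ Ω i
    · obtain ⟨m, rfl⟩ | ⟨m, rfl⟩ := not_not.mp fun h => hz ⟨hzi, h⟩
      · exact apply_eq_self_of_apply_eq_self_of_mem hdisj _ hfix (hmem m).1 (hax m) i
      · exact apply_eq_self_of_apply_eq_self_of_mem hdisj _ hfix (hmem m).2 (hbx m) i
    · exact hfix i z hzi
  · rw [Set.mem_union, not_or] at hz
    rw [phiXgen_apply_of_notMem hz.1 hz.2, prod_ofFn_perm_apply_of_mem hdisj _ hfix hzi]

end Composition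

theorem composition_transitive_general
    (p q r t : ℕ)
    (𝒰 : Type) [DecidableEq 𝒰]
    (Ω : Fin t → Set 𝒰)
    (hdisj : Pairwise fun i i' => Disjoint (Ω i) (Ω i'))
    (hcover : (⋃ i, Ω i) = Set.univ)
    (π : Fin t → (Tri p q r →* Equiv.Perm 𝒰))
    (hfix : ∀ (i : Fin t) (g : Tri p q r) (z : 𝒰), z ∉ Ω i → π i g z = z)
    (htrans : ∀ i : Fin t, ∀ z ∈ Ω i, ∀ z' ∈ Ω i, ∃ g : Tri p q r, π i g z = z')
    (j : Fin p → Fin t) (hjsurj : Function.Surjective j)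
    (a b : Fin p → 𝒰)
    (hmem : ∀ i, a i ∈ Ω (j i) ∧ b i ∈ Ω (j i))
    (hax : ∀ i, π (j i) (gx p q r) (a i) = a i)
    (hbx : ∀ i, π (j i) (gx p q r) (b i) = b i)
    (hdistinct : Function.Injective (Sum.elim a b)) :
    ∀ z z' : 𝒰, ∃ h ∈ Subgroup.closure {phiXgen p q r t 𝒰 π a b, phiYgen p q r t 𝒰 π},
      h z = z' := by
  intro z z'
  set H := Subgroup.closure {phiXgen p q r t 𝒰 π a b, phiYgen p q r t 𝒰 π}
  have hφx : phiXgen p q r t 𝒰 π a b ∈ H := Subgroup.subset_closure (by simp)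
  have hφy : phiYgen p q r t 𝒰 π ∈ H := Subgroup.subset_closure (by simp)
  have hfix' : ∀ g i, ∀ z ∉ Ω i, π i g z = z := fun g i => hfix i g
  have hπ : ∀ g i u, MulAction.orbit H (π i g u) = MulAction.orbit H u := by
    refine fun g i => orbit_map_apply_of_closure_eq_top (closure_gx_gy p q r) (π i) ?_ g
    rintro x (rfl | rfl)
    · exact orbit_apply_gx_eq hφx hdisj (hfix' _) hmem hax hbx i
    · exact orbit_apply_eq_of_eqOn hφy (hfix' _ i)
        fun z hz => prod_ofFn_perm_apply_of_mem hdisj _ (hfix' _) hz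
  have ha : ∀ m m', MulAction.orbit H (a m) = MulAction.orbit H (a m') := by
    refine Fin.apply_eq_of_forall_succ_eq _ fun n hn => ?_
    rw [← phiXgen_apply_succ hdistinct _ hn, orbit_perm_apply_of_mem hφx]
    intro m
    rw [prod_ofFn_perm_apply_of_mem hdisj _ (hfix' _) (hmem m).1, hax m]
  have hz : ∀ z, ∃ m, MulAction.orbit H z = MulAction.orbit H (a m) := by
    intro z
    obtain ⟨i, hzi⟩ := Set.mem_iUnion.mp (hcover ▸ Set.mem_univ z)
    obtain ⟨m, rfl⟩ := hjsurj i
    obtain ⟨g, hg⟩ := htrans _ z hzi (a m) (hmem m).1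
    exact ⟨m, hg ▸ (hπ g _ z).symm⟩
  obtain ⟨m, hm⟩ := hz z
  obtain ⟨m', hm'⟩ := hz z'
  have hz' : z' ∈ MulAction.orbit H z := by
    rw [hm, ha m m', ← hm']
    exact MulAction.mem_orbit_self z'
  obtain ⟨⟨h, hh⟩, rfl⟩ := hz'
  exact ⟨h, hh, rfl⟩

theorem composition_transitive
    (p q r t k : ℕ) (hq : 0 < q) (hr : 0 < r) (ht : 0 < t) (htp : t ≤ p) (hk : 0 < k)
    (𝒰 : Type) [Fintype 𝒰] [DecidableEq 𝒰]
    (Ω : Fin t → Set 𝒰)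
    (hdisj : Pairwise fun i i' => Disjoint (Ω i) (Ω i'))
    (hcover : (⋃ i, Ω i) = Set.univ)
    (π : Fin t → (Tri p q r →* Equiv.Perm 𝒰))
    (hfix : ∀ (i : Fin t) (g : Tri p q r) (z : 𝒰), z ∉ Ω i → π i g z = z)
    (hstab : ∀ (i : Fin t) (g : Tri p q r) (z : 𝒰), z ∈ Ω i → π i g z ∈ Ω i)
    (htrans : ∀ i : Fin t, ∀ z ∈ Ω i, ∀ z' ∈ Ω i, ∃ g : Tri p q r, π i g z = z')
    (j : Fin p → Fin t) (hjsurj : Function.Surjective j)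
    (a b : Fin p → 𝒰)
    (hmem : ∀ i, a i ∈ Ω (j i) ∧ b i ∈ Ω (j i))
    (hax : ∀ i, π (j i) (gx p q r) (a i) = a i)
    (hbx : ∀ i, π (j i) (gx p q r) (b i) = b i)
    (hhandle : ∀ i, ((π (j i) (gx p q r * gy p q r)) ^ k) (a i) = b i)
    (hdistinct : Function.Injective (Sum.elim a b))
    (horb_a : ∀ (i i' : Fin p) (n : ℤ),
      ((π (j i) (gx p q r * gy p q r)) ^ n) (a i) = a i' → i' = i)
    (horb_b : ∀ (i i' : Fin p) (n : ℤ),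
      ((π (j i) (gx p q r * gy p q r)) ^ n) (a i) = b i' → i' = i)
    (hks : ∀ i, k <
      Nat.card {w : 𝒰 | ∃ n : ℤ, ((π (j i) (gx p q r * gy p q r)) ^ n) (a i) = w}) :
    ∀ z z' : 𝒰, ∃ h ∈ Subgroup.closure {phiXgen p q r t 𝒰 π a b, phiYgen p q r t 𝒰 π},
      h z = z' :=
  composition_transitive_general p q r t 𝒰 Ω hdisj hcover π hfix htrans j hjsurj a b hmem hax hbx
    hdistinct
end

section
/- In the equivalent-copies construction, for every ω ∈ Ω the set B_ω is a block for the action of H = φ(Δ(p,q,r)) on 𝒰; hence, when |Ω| > 1, H acts imprimitively on 𝒰 with block system ℬ = {B_ω : ω ∈ Ω}. -/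
open Equiv

/-- A permutation of `Ω` acting simultaneously on every copy `{i} × Ω`;
this models `π_1(g)π_2(g)⋯π_p(g)` on the disjoint union `𝒰 = Ω_1 ∪ ⋯ ∪ Ω_p`. -/
def prodCongrHom (ι Ω : Type) : Equiv.Perm Ω →* Equiv.Perm (ι × Ω) where
  toFun σ := Equiv.prodCongr (Equiv.refl ι) σ
  map_one' := Equiv.ext fun z => by cases z; rfl
  map_mul' σ τ := Equiv.ext fun z => by cases z; rfl

/-- The `p`-cycle `(f_1(ω), f_2(ω), …, f_p(ω))`, where `f_i(ω) = (i, ω)`. -/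
def fiberCycle (p : ℕ) (Ω : Type) [DecidableEq Ω] (ω : Ω) : Equiv.Perm (Fin p × Ω) :=
  (List.ofFn fun i : Fin p => ((i, ω) : Fin p × Ω)).formPerm

/-- `φ_x = π_1(x)⋯π_p(x) ∘ (a_1,…,a_p)(b_p,…,b_1)` on `𝒰 = Fin p × Ω`. -/
def phiX (p q r : ℕ) (Ω : Type) [DecidableEq Ω]
    (π : Tri p q r →* Equiv.Perm Ω) (a b : Ω) : Equiv.Perm (Fin p × Ω) :=
  prodCongrHom (Fin p) Ω (π (gx p q r)) * fiberCycle p Ω a *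
    ((List.ofFn fun i : Fin p => ((i, b) : Fin p × Ω)).reverse).formPerm

/-- `φ_y = π_1(y)⋯π_p(y)` on `𝒰 = Fin p × Ω`. -/
def phiY (p q r : ℕ) (Ω : Type) (π : Tri p q r →* Equiv.Perm Ω) : Equiv.Perm (Fin p × Ω) :=
  prodCongrHom (Fin p) Ω (π (gy p q r))

/-- The block `B_ω = {f_1(ω), …, f_p(ω)}` where `f_i(ω) = (i, ω)`. -/
def Bset (p : ℕ) {Ω : Type} (ω : Ω) : Set (Fin p × Ω) :=
  Set.range fun i : Fin p => ((i, ω) : Fin p × Ω)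

/-!
Both generators `φ_x`, `φ_y` lie over `π(x)`, `π(y)` along the projection `𝒰 → Ω`, `f_i(ω) ↦ ω`:
`φ_y` by definition, and `φ_x` because the two extra cycles move points only inside the fibres
`B_a` and `B_b`. Hence every `φ(g)` lies over `π(g)` and maps the fibre `B_ω` onto `B_{π(g)ω}`.
Fibres of a map are pairwise disjoint, so each `B_ω` is a block, and `ℬ` partitions `𝒰`.
-/

open Function

section Semiconj

variable {G α β : Type*} [Group G]

def semiconjSubgroup (f : α → β) (φ : G →* Perm α) (π : G →* Perm β) : Subgroup G where
  carrier := {g | Semiconj f (φ g) (π g)}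
  one_mem' := by
    change Semiconj f (φ 1) (π 1)
    rw [map_one, map_one]
    exact Semiconj.id_right
  mul_mem' {g h} (hg : Semiconj f (φ g) (π g)) (hh : Semiconj f (φ h) (π h)) := by
    change Semiconj f (φ (g * h)) (π (g * h))
    rw [map_mul, map_mul, Perm.coe_mul, Perm.coe_mul]
    exact hg.comp_right hh
  inv_mem' {g} (hg : Semiconj f (φ g) (π g)) := by
    change Semiconj f (φ g⁻¹) (π g⁻¹)
    rw [map_inv, map_inv, Perm.coe_inv, Perm.coe_inv]
    exact hg.inverses_right (φ g).right_inv (π g).left_inv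

theorem PresentedGroup.semiconj_of_semiconj_of {ι : Type*} {rels : Set (FreeGroup ι)}
    {f : α → β} {φ : PresentedGroup rels →* Perm α} {π : PresentedGroup rels →* Perm β}
    (h : ∀ i, Semiconj f (φ (.of i)) (π (.of i))) (g : PresentedGroup rels) :
    Semiconj f (φ g) (π g) :=
  PresentedGroup.generated_by rels (semiconjSubgroup f φ π) h g

theorem Function.Semiconj.image_preimage_singleton {f : α → β} {σ : Perm α} {τ : Perm β}
    (h : Semiconj f σ τ) (y : β) : σ '' (f ⁻¹' {y}) = f ⁻¹' {τ y} := by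
  ext x
  have hsymm : f (σ.symm x) = τ.symm (f x) := h.inverses_right σ.right_inv τ.left_inv x
  simp only [Equiv.image_eq_preimage_symm, Set.mem_preimage, hsymm, Set.mem_singleton_iff,
    Equiv.symm_apply_eq]

theorem Function.Semiconj.image_fiber_eq_or_disjoint {f : α → β} {σ : Perm α}
    {τ : Perm β} (h : Semiconj f σ τ) (y : β) :
    σ '' (f ⁻¹' {y}) = f ⁻¹' {y} ∨ Disjoint (σ '' (f ⁻¹' {y})) (f ⁻¹' {y}) := by
  rw [h.image_preimage_singleton]
  by_cases hy : τ y = y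
  · exact Or.inl (by rw [hy])
  · exact Or.inr ((Set.disjoint_singleton.mpr hy).preimage f)

end Semiconj

theorem List.apply_formPerm_apply_eq {α β : Type*} [DecidableEq α] {f : α → β} {c : β}
    {l : List α} (hl : ∀ z ∈ l, f z = c) (z : α) : f (l.formPerm z) = f z := by
  by_cases hz : z ∈ l
  · rw [hl _ (l.formPerm_apply_mem_of_mem hz), hl _ hz]
  · rw [List.formPerm_apply_of_notMem hz]

theorem mem_Bset_iff {p : ℕ} {Ω : Type} {ω : Ω} {u : Fin p × Ω} :
    u ∈ Bset p ω ↔ u.2 = ω :=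
  ⟨by rintro ⟨i, rfl⟩; rfl, fun h => ⟨u.1, Prod.ext rfl h.symm⟩⟩

theorem Bset_eq_preimage_snd (p : ℕ) {Ω : Type} (ω : Ω) :
    Bset p ω = Prod.snd ⁻¹' {ω} :=
  Set.ext fun _ => mem_Bset_iff

theorem semiconj_snd_prodCongrHom (ι Ω : Type) (σ : Perm Ω) :
    Semiconj Prod.snd (prodCongrHom ι Ω σ) σ :=
  fun _ => rfl

theorem snd_eq_of_mem_ofFn {p : ℕ} {Ω : Type} {c : Ω} {z : Fin p × Ω}
    (hz : z ∈ List.ofFn fun i : Fin p => ((i, c) : Fin p × Ω)) : z.2 = c := by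
  obtain ⟨i, rfl⟩ := List.mem_ofFn.mp hz
  rfl

theorem semiconj_snd_phiX (p q r : ℕ) (Ω : Type) [DecidableEq Ω]
    (π : Tri p q r →* Perm Ω) (a b : Ω) :
    Semiconj Prod.snd (phiX p q r Ω π a b) (π (gx p q r)) := by
  intro z
  simp only [phiX, fiberCycle, Perm.mul_apply]
  rw [semiconj_snd_prodCongrHom, List.apply_formPerm_apply_eq fun _ => snd_eq_of_mem_ofFn,
    List.apply_formPerm_apply_eq fun _ hz => snd_eq_of_mem_ofFn (List.mem_reverse.mp hz)]

theorem blocks_imprimitive_general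
    (p q r : ℕ) (hp : p.Prime)
    (Ω : Type) [Fintype Ω] [DecidableEq Ω]
    (π : Tri p q r →* Equiv.Perm Ω)
    (a b : Ω)
    (φ : Tri p q r →* Equiv.Perm (Fin p × Ω))
    (hφx : φ (gx p q r) = phiX p q r Ω π a b)
    (hφy : φ (gy p q r) = phiY p q r Ω π)
    :
    (∀ (ω : Ω) (g : Tri p q r),
      ⇑(φ g) '' Bset p ω = Bset p ω ∨ Disjoint (⇑(φ g) '' Bset p ω) (Bset p ω)) ∧
    (∀ u : Fin p × Ω, ∃! ω : Ω, u ∈ Bset p ω) ∧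
    (1 < Fintype.card Ω →
      ∀ ω : Ω, Bset p ω ≠ ∅ ∧ Bset p ω ≠ Set.univ) := by
  have hsemiconj (g : Tri p q r) : Semiconj Prod.snd (φ g) (π g) := by
    refine PresentedGroup.semiconj_of_semiconj_of (fun i => ?_) g
    fin_cases i
    · exact hφx ▸ semiconj_snd_phiX p q r Ω π a b
    · exact hφy ▸ semiconj_snd_prodCongrHom (Fin p) Ω (π (gy p q r))
  have i₀ : Fin p := ⟨0, hp.pos⟩
  refine ⟨fun ω g => ?_, fun u => ?_, fun hcard ω => ⟨?_, ?_⟩⟩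
  · rw [Bset_eq_preimage_snd]
    exact (hsemiconj g).image_fiber_eq_or_disjoint ω
  · exact ⟨u.2, mem_Bset_iff.mpr rfl, fun ω hω => (mem_Bset_iff.mp hω).symm⟩
  · exact Set.Nonempty.ne_empty ⟨(i₀, ω), mem_Bset_iff.mpr rfl⟩
  · obtain ⟨ω', hω'⟩ := Fintype.exists_ne_of_one_lt_card hcard ω
    intro h
    have hmem : (i₀, ω') ∈ Bset p ω := h ▸ Set.mem_univ _
    exact hω' (mem_Bset_iff.mp hmem)

theorem blocks_imprimitive
    (p q r k : ℕ) (hp : p.Prime) (hq : 0 < q) (hr : 0 < r) (hk : 0 < k)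
    (Ω : Type) [Fintype Ω] [DecidableEq Ω]
    (π : Tri p q r →* Equiv.Perm Ω)
    (htrans : ∀ z z' : Ω, ∃ g : Tri p q r, π g z = z')
    (a b : Ω) (hab : a ≠ b)
    (hax : π (gx p q r) a = a) (hbx : π (gx p q r) b = b)
    (hhandle : ((π (gx p q r * gy p q r)) ^ k) a = b)
    (hks : k < Nat.card {w : Ω | ∃ n : ℤ, ((π (gx p q r * gy p q r)) ^ n) a = w})
    (φ : Tri p q r →* Equiv.Perm (Fin p × Ω))
    (hφx : φ (gx p q r) = phiX p q r Ω π a b)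
    (hφy : φ (gy p q r) = phiY p q r Ω π)
    :
    (∀ (ω : Ω) (g : Tri p q r),
      ⇑(φ g) '' Bset p ω = Bset p ω ∨ Disjoint (⇑(φ g) '' Bset p ω) (Bset p ω)) ∧
    (∀ u : Fin p × Ω, ∃! ω : Ω, u ∈ Bset p ω) ∧
    (1 < Fintype.card Ω →
      ∀ ω : Ω, Bset p ω ≠ ∅ ∧ Bset p ω ≠ Set.univ) :=
  blocks_imprimitive_general p q r hp Ω π a b φ hφx hφy
end

section
/- In the equivalent-copies construction, let J ≤ H be the setwise stabiliser of B_a = {a_1,…,a_p} in H and let Q ≤ Sym(B_a) be the image of the restriction homomorphism J → Sym(B_a). Then Q is cyclic of order p, generated by the restriction of φ_x to B_a, which is the p-cycle (a_1,a_2,…,a_p). -/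
open Equiv

/-!
Every generator of `Δ(p,q,r)` acts through `φ` as an element of the wreath product
`⟨ρ⟩ ≀ Sym(Ω)` on `Fin p × Ω`, where `ρ = finRotate p` rotates the copy index: `π_i(x)` and
`π_i(y)` preserve it, and the two fibre cycles of `φ_x` shift it by `ρ^{±1}`. Hence every element
of `H` fixing the block `B_a` induces a power of `ρ` on it. Conversely `φ_x` induces `ρ` itself on
`B_a`, because `a ≠ b` and `a` is fixed by `π(x)`; so `Q = ⟨ρ⟩`, cyclic of order `p`.
-/

lemma fiberCycle_apply_of_ne {p : ℕ} {Ω : Type} [DecidableEq Ω] {ω ω' : Ω} (h : ω' ≠ ω)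
    (i : Fin p) : fiberCycle p Ω ω (i, ω') = (i, ω') :=
  List.formPerm_apply_of_notMem <| by
    simp only [List.mem_ofFn, Prod.mk.injEq, not_exists, not_and]
    exact fun _ _ h' => h h'.symm

lemma fiberCycle_apply_self {p : ℕ} {Ω : Type} [DecidableEq Ω] (ω : Ω) (i : Fin p) :
    fiberCycle p Ω ω (i, ω) = (finRotate p i, ω) := by
  obtain _ | n := p
  · exact i.elim0
  have hnd : (List.ofFn fun j : Fin (n + 1) => ((j, ω) : Fin (n + 1) × Ω)).Nodup :=
    List.nodup_ofFn.mpr fun _ _ h => congrArg Prod.fst h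
  have := List.formPerm_apply_getElem _ hnd i (by simp; omega)
  simp only [List.getElem_ofFn, List.length_ofFn] at this
  rw [fiberCycle, this, finRotate_apply]
  congr 1
  ext
  simp [Fin.val_add]

lemma phiX_eq_mul (p q r : ℕ) (Ω : Type) [DecidableEq Ω] (π : Tri p q r →* Perm Ω) (a b : Ω) :
    phiX p q r Ω π a b =
      prodCongrHom (Fin p) Ω (π (gx p q r)) * fiberCycle p Ω a * (fiberCycle p Ω b)⁻¹ := by
  rw [phiX, List.formPerm_reverse, fiberCycle, fiberCycle]

lemma phiX_apply_mk_left {p q r : ℕ} {Ω : Type} [DecidableEq Ω] {π : Tri p q r →* Perm Ω}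
    {a b : Ω} (hab : a ≠ b) (i : Fin p) :
    phiX p q r Ω π a b (i, a) = (finRotate p i, π (gx p q r) a) := by
  rw [phiX_eq_mul, Perm.mul_apply, Perm.mul_apply, Perm.inv_eq_iff_eq.mpr
    (fiberCycle_apply_of_ne hab i).symm, fiberCycle_apply_self]
  rfl

/-- The wreath product `C ≀ Sym(Ω)` in its imprimitive action on `ι × Ω`. -/
def wreathSubgroup {ι : Type*} (C : Subgroup (Perm ι)) (Ω : Type*) :
    Subgroup (Perm (ι × Ω)) where
  carrier := {σ | ∃ (τ : Ω → Perm ι) (s : Perm Ω), (∀ ω, τ ω ∈ C) ∧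
    ∀ i ω, σ (i, ω) = (τ ω i, s ω)}
  one_mem' := ⟨1, 1, fun _ => C.one_mem, fun _ _ => rfl⟩
  mul_mem' := by
    rintro σ₁ σ₂ ⟨τ₁, s₁, hτ₁, h₁⟩ ⟨τ₂, s₂, hτ₂, h₂⟩
    exact ⟨fun ω => τ₁ (s₂ ω) * τ₂ ω, s₁ * s₂, fun ω => C.mul_mem (hτ₁ _) (hτ₂ ω),
      fun i ω => by simp [h₁, h₂]⟩
  inv_mem' := by
    rintro σ ⟨τ, s, hτ, h⟩
    refine ⟨fun ω => (τ (s⁻¹ ω))⁻¹, s⁻¹, fun ω => C.inv_mem (hτ _), fun i ω => ?_⟩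
    rw [Perm.inv_eq_iff_eq, h]
    simp

lemma prodCongrHom_mem_wreathSubgroup {ι Ω : Type} (C : Subgroup (Perm ι)) (s : Perm Ω) :
    prodCongrHom ι Ω s ∈ wreathSubgroup C Ω :=
  ⟨1, s, fun _ => C.one_mem, fun _ _ => rfl⟩

lemma fiberCycle_mem_wreathSubgroup (p : ℕ) {Ω : Type} [DecidableEq Ω] (ω₀ : Ω) :
    fiberCycle p Ω ω₀ ∈ wreathSubgroup (Subgroup.zpowers (finRotate p)) Ω := by
  refine ⟨fun ω => if ω = ω₀ then finRotate p else 1, 1, fun ω => ?_, fun i ω => ?_⟩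
  · dsimp only
    split_ifs
    exacts [Subgroup.mem_zpowers _, one_mem _]
  · dsimp only
    split_ifs with h
    · rw [h, fiberCycle_apply_self]; rfl
    · rw [fiberCycle_apply_of_ne h]; rfl

lemma phiX_mem_wreathSubgroup (p q r : ℕ) (Ω : Type) [DecidableEq Ω] (π : Tri p q r →* Perm Ω)
    (a b : Ω) : phiX p q r Ω π a b ∈ wreathSubgroup (Subgroup.zpowers (finRotate p)) Ω := by
  rw [phiX_eq_mul]
  exact mul_mem (mul_mem (prodCongrHom_mem_wreathSubgroup _ _)
    (fiberCycle_mem_wreathSubgroup p a)) (inv_mem (fiberCycle_mem_wreathSubgroup p b))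

lemma map_mem_of_gx_gy {p q r : ℕ} {G : Type*} [Group G] {H : Subgroup G}
    (φ : Tri p q r →* G) (hx : φ (gx p q r) ∈ H) (hy : φ (gy p q r) ∈ H) (g : Tri p q r) :
    φ g ∈ H :=
  PresentedGroup.generated_by _ (H.comap φ) (fun j => by fin_cases j; exacts [hx, hy]) g

lemma zpow_apply_mk_of_forall {ι Ω : Type*} {σ : Perm (ι × Ω)} {τ : Perm ι} {a : Ω}
    (h : ∀ i, σ (i, a) = (τ i, a)) (m : ℤ) (i : ι) : (σ ^ m) (i, a) = ((τ ^ m) i, a) := by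
  induction m using Int.induction_on generalizing i with
  | zero => rfl
  | succ m ih => rw [zpow_add_one, Perm.mul_apply, h, ih, zpow_add_one, Perm.mul_apply]
  | pred m ih =>
    have hinv : σ⁻¹ (i, a) = (τ⁻¹ i, a) := by rw [Perm.inv_eq_iff_eq, h]; simp
    rw [zpow_sub_one, Perm.mul_apply, hinv, ih, zpow_sub_one, Perm.mul_apply]

lemma setOf_forall_apply_mk_eq_zpowers {G ι Ω : Type*} [Group G] (φ : G →* Perm (ι × Ω))
    {c : Perm ι} (hφ : ∀ g, φ g ∈ wreathSubgroup (Subgroup.zpowers c) Ω) {a : Ω} {g₀ : G}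
    (hg₀ : ∀ i, φ g₀ (i, a) = (c i, a)) :
    {σ : Perm ι | ∃ g : G, ∀ i, φ g (i, a) = (σ i, a)} = Subgroup.zpowers c := by
  ext σ
  constructor
  · rintro ⟨g, hg⟩
    obtain ⟨τ, s, hτ, hφg⟩ := hφ g
    have hστ : σ = τ a := Perm.ext fun i => congrArg Prod.fst ((hg i).symm.trans (hφg i a))
    exact hστ ▸ hτ a
  · rintro ⟨m, rfl⟩
    exact ⟨g₀ ^ m, fun i => by rw [map_zpow]; exact zpow_apply_mk_of_forall hg₀ m i⟩

lemma orderOf_finRotate {n : ℕ} (hn : 2 ≤ n) : orderOf (finRotate n) = n := by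
  rw [(isCycle_finRotate_of_le hn).orderOf, support_finRotate_of_le hn, Finset.card_univ,
    Fintype.card_fin]

theorem block_stabiliser_quotient_cyclic_general
    (p q r : ℕ) (hp : p.Prime)
    (Ω : Type) [DecidableEq Ω]
    (π : Tri p q r →* Equiv.Perm Ω)
    (a b : Ω) (hab : a ≠ b)
    (hax : π (gx p q r) a = a)
    (φ : Tri p q r →* Equiv.Perm (Fin p × Ω))
    (hφx : φ (gx p q r) = phiX p q r Ω π a b)
    (hφy : φ (gy p q r) = phiY p q r Ω π)
    :
    (∀ i : Fin p, phiX p q r Ω π a b (i, a) = (finRotate p i, a)) ∧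
    {σ : Equiv.Perm (Fin p) | ∃ g : Tri p q r, ∀ i : Fin p, φ g (i, a) = (σ i, a)} =
      ↑(Subgroup.zpowers (finRotate p)) ∧
    orderOf (finRotate p) = p ∧
    Nat.card {σ : Equiv.Perm (Fin p) | ∃ g : Tri p q r, ∀ i : Fin p, φ g (i, a) = (σ i, a)}
      = p := by
  have hrot : ∀ i, phiX p q r Ω π a b (i, a) = (finRotate p i, a) := fun i => by
    rw [phiX_apply_mk_left hab, hax]
  have hφ : ∀ g, φ g ∈ wreathSubgroup (Subgroup.zpowers (finRotate p)) Ω :=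
    map_mem_of_gx_gy φ (hφx ▸ phiX_mem_wreathSubgroup p q r Ω π a b)
      (hφy ▸ prodCongrHom_mem_wreathSubgroup _ _)
  have hQ := setOf_forall_apply_mk_eq_zpowers φ hφ (g₀ := gx p q r) (hφx ▸ hrot)
  have horder := orderOf_finRotate hp.two_le
  exact ⟨hrot, hQ, horder, by rw [hQ]; exact (Nat.card_zpowers _).trans horder⟩

theorem block_stabiliser_quotient_cyclic
    (p q r k : ℕ) (hp : p.Prime) (hq : 0 < q) (hr : 0 < r) (hk : 0 < k)
    (Ω : Type) [Fintype Ω] [DecidableEq Ω]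
    (π : Tri p q r →* Equiv.Perm Ω)
    (htrans : ∀ z z' : Ω, ∃ g : Tri p q r, π g z = z')
    (a b : Ω) (hab : a ≠ b)
    (hax : π (gx p q r) a = a) (hbx : π (gx p q r) b = b)
    (hhandle : ((π (gx p q r * gy p q r)) ^ k) a = b)
    (hks : k < Nat.card {w : Ω | ∃ n : ℤ, ((π (gx p q r * gy p q r)) ^ n) a = w})
    (φ : Tri p q r →* Equiv.Perm (Fin p × Ω))
    (hφx : φ (gx p q r) = phiX p q r Ω π a b)
    (hφy : φ (gy p q r) = phiY p q r Ω π)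
    :
    (∀ i : Fin p, phiX p q r Ω π a b (i, a) = (finRotate p i, a)) ∧
    {σ : Equiv.Perm (Fin p) | ∃ g : Tri p q r, ∀ i : Fin p, φ g (i, a) = (σ i, a)} =
      ↑(Subgroup.zpowers (finRotate p)) ∧
    orderOf (finRotate p) = p ∧
    Nat.card {σ : Equiv.Perm (Fin p) | ∃ g : Tri p q r, ∀ i : Fin p, φ g (i, a) = (σ i, a)}
      = p :=
  block_stabiliser_quotient_cyclic_general p q r hp Ω π a b hab hax φ hφx hφy
end

section
/- In the equivalent-copies construction, for ω ∈ Ω let τ_ω ∈ Sym(𝒰) denote the p-cycle (f_1(ω), f_2(ω), …, f_p(ω)), let V = ⟨τ_ω τ_{ω′}^{−1} : ω, ω′ ∈ Ω⟩ ≤ Sym(𝒰) and let C = {π_1(g)π_2(g)⋯π_p(g) : g ∈ Δ(p,q,r)} ≤ Sym(𝒰). Then every element of H is a product of an element of C and an element of V; moreover N ⊆ V, and consequently N is an elementary abelian p-group of order at most p^{deg−1}. -/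
open Equiv

/-!
Every `φ g` lies in `C ⊔ V`: `φ_y` is the diagonal lift of `π y`, `φ_x` is the diagonal lift of
`π x` times `τ_a τ_b⁻¹`, and conjugating `τ_ω` by the diagonal lift of `σ` gives `τ_{σ ω}`, so `C`
normalizes `V` and `C ⊔ V = C V`. Elements of `V` act inside each block, so if `c v` fixes every
block then so does the diagonal lift `c`, which forces `c = 1`; hence `N ⊆ V`.
Finally, rotating the fibre over `ω` by the `ω`-th coordinate embeds `(ℤ/p)^Ω` in `Sym(𝒰)`, and
`V` is the image of the coordinate-sum-zero vectors, a group of exponent `p` and order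
`p ^ (|Ω| - 1)`.
-/

open Subgroup

theorem List.formPerm_map_apply {α β : Type*} [DecidableEq α] [DecidableEq β] {f : α → β}
    (hf : Function.Injective f) (l : List α) (x : α) :
    (l.map f).formPerm (f x) = f (l.formPerm x) := by
  induction l with
  | nil => rfl
  | cons y l ih =>
    cases l with
    | nil => rfl
    | cons z l =>
      simp only [List.map_cons, List.formPerm_cons_cons, Perm.mul_apply] at ih ⊢
      rw [ih, hf.swap_apply]

section Fiberwise

variable {ι Ω : Type}

def prodCongrLeftHom : (Ω → Perm ι) →* Perm (ι × Ω) where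
  toFun e := prodCongrLeft e
  map_one' := rfl
  map_mul' _ _ := rfl

theorem prodCongrLeftHom_apply (e : Ω → Perm ι) (i : ι) (ω : Ω) :
    prodCongrLeftHom e (i, ω) = (e ω i, ω) := rfl

theorem prodCongrHom_conj_prodCongrLeftHom (σ : Perm Ω) (e : Ω → Perm ι) :
    prodCongrHom ι Ω σ * prodCongrLeftHom e * (prodCongrHom ι Ω σ)⁻¹ =
      prodCongrLeftHom (e ∘ σ.symm) := by
  rw [← map_inv]
  ext ⟨i, ω⟩ <;> simp [prodCongrHom, prodCongrLeftHom_apply]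

variable (ι Ω) in
def fiberPreserving : Subgroup (Perm (ι × Ω)) where
  carrier := {h | ∀ z, (h z).2 = z.2}
  mul_mem' hg hh z := (hg _).trans (hh z)
  one_mem' _ := rfl
  inv_mem' {h} hh z := by simpa using (hh (h⁻¹ z)).symm

theorem range_prodCongrLeftHom_le : (prodCongrLeftHom (ι := ι) (Ω := Ω)).range ≤
    fiberPreserving ι Ω := by
  rintro _ ⟨e, rfl⟩ _
  rfl

theorem eq_one_of_prodCongrHom_mem_fiberPreserving [Nonempty ι] {σ : Perm Ω}
    (h : prodCongrHom ι Ω σ ∈ fiberPreserving ι Ω) : σ = 1 :=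
  Equiv.ext fun ω => h (Classical.arbitrary ι, ω)

end Fiberwise

theorem mem_fiberPreserving_of_image_Bset {p : ℕ} {Ω : Type} {h : Perm (Fin p × Ω)}
    (hB : ∀ ω : Ω, ⇑h '' Bset p ω = Bset p ω) : h ∈ fiberPreserving (Fin p) Ω := by
  rintro ⟨i, ω⟩
  obtain ⟨j, hj⟩ : h (i, ω) ∈ Bset p ω := hB ω ▸ Set.mem_image_of_mem h ⟨i, rfl⟩
  rw [← hj]

def cyclicShift (p : ℕ) : Perm (Fin p) := (List.finRange p).formPerm

theorem cyclicShift_pow_self (p : ℕ) : cyclicShift p ^ p = 1 := by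
  simpa [cyclicShift] using List.formPerm_pow_length_eq_one_of_nodup _ (List.nodup_finRange p)

section FiberCycle

variable {p : ℕ} {Ω : Type} [DecidableEq Ω]

theorem fiberCycle_eq_prodCongrLeftHom (ω : Ω) :
    fiberCycle p Ω ω = prodCongrLeftHom (Pi.mulSingle ω (cyclicShift p)) := by
  refine Equiv.ext fun ⟨i, ρ⟩ => ?_
  rw [prodCongrLeftHom_apply]
  rcases eq_or_ne ρ ω with rfl | hρ
  · have hinj : Function.Injective fun j : Fin p => (j, ρ) := fun _ _ h => congrArg Prod.fst h
    rw [fiberCycle, List.ofFn_eq_map, List.formPerm_map_apply hinj, Pi.mulSingle_eq_same,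
      cyclicShift]
  · rw [fiberCycle, List.formPerm_apply_of_notMem, Pi.mulSingle_eq_of_ne hρ, Perm.one_apply]
    simpa [eq_comm] using hρ

theorem prodCongrHom_conj_fiberCycle (σ : Perm Ω) (ω : Ω) :
    MulAut.conj (prodCongrHom (Fin p) Ω σ) (fiberCycle p Ω ω) = fiberCycle p Ω (σ ω) := by
  rw [MulAut.conj_apply, fiberCycle_eq_prodCongrLeftHom, fiberCycle_eq_prodCongrLeftHom,
    prodCongrHom_conj_prodCongrLeftHom, Pi.mulSingle_comp_equiv, Equiv.symm_symm]

end FiberCycle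

open scoped IsMulCommutative

section PiProd

variable (A Ω : Type*) [CommGroup A] [Fintype Ω]

def piProdHom : (Ω → A) →* A :=
  MonoidHom.mk' (fun f => ∏ ω, f ω) fun _ _ => Finset.prod_mul_distrib

variable {A Ω}

theorem card_ker_piProdHom_le [Finite A] [Nonempty Ω] :
    Nat.card (piProdHom A Ω).ker ≤ Nat.card A ^ (Fintype.card Ω - 1) := by
  classical
  obtain ⟨a⟩ := ‹Nonempty Ω›
  have hinj : Function.Injective
      fun (f : (piProdHom A Ω).ker) (ω : {ω // ω ≠ a}) => f.1 ω := by
    rintro ⟨f, hf⟩ ⟨g, hg⟩ hfg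
    have hne : ∀ ω, ω ≠ a → f ω = g ω := fun ω hω => congrFun hfg ⟨ω, hω⟩
    have hprod : f a * ∏ ω ∈ {a}ᶜ, f ω = g a * ∏ ω ∈ {a}ᶜ, g ω := by
      rw [← Fintype.prod_eq_mul_prod_compl, ← Fintype.prod_eq_mul_prod_compl]
      exact hf.trans hg.symm
    rw [Finset.prod_congr rfl fun ω hω => hne ω (by simpa using hω)] at hprod
    ext1
    funext ω
    rcases eq_or_ne ω a with rfl | hω
    · exact mul_right_cancel hprod
    · exact hne ω hω
  calc Nat.card (piProdHom A Ω).ker ≤ Nat.card ({ω // ω ≠ a} → A) :=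
        Nat.card_le_card_of_injective _ hinj
    _ = Nat.card A ^ (Fintype.card Ω - 1) := by
      rw [Nat.card_fun, Nat.card_eq_fintype_card (α := {ω // ω ≠ a}),
        Fintype.card_subtype_compl, Fintype.card_subtype_eq]

end PiProd

section FiberCycleDiffs

variable (p : ℕ) (Ω : Type) [DecidableEq Ω]

def fiberCycleDiffs : Subgroup (Perm (Fin p × Ω)) :=
  closure {u | ∃ ω ω' : Ω, u = fiberCycle p Ω ω * (fiberCycle p Ω ω')⁻¹}

def cycleModel : (Ω → zpowers (cyclicShift p)) →* Perm (Fin p × Ω) :=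
  prodCongrLeftHom.comp ((zpowers (cyclicShift p)).subtype.compLeft Ω)

def fiberShift (ω : Ω) : Ω → zpowers (cyclicShift p) :=
  Pi.mulSingle ω ⟨cyclicShift p, mem_zpowers _⟩

theorem cycleModel_fiberShift (ω : Ω) :
    cycleModel p Ω (fiberShift p Ω ω) = fiberCycle p Ω ω := by
  rw [fiberCycle_eq_prodCongrLeftHom, cycleModel, MonoidHom.comp_apply]
  congr 1
  funext ρ
  exact Pi.apply_mulSingle (fun _ => Subtype.val) (fun _ => rfl) ω _ ρ

theorem fiberCycle_mul_inv_eq_cycleModel (ω ω' : Ω) :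
    fiberCycle p Ω ω * (fiberCycle p Ω ω')⁻¹ =
      cycleModel p Ω (fiberShift p Ω ω * (fiberShift p Ω ω')⁻¹) := by
  rw [map_mul, map_inv, cycleModel_fiberShift, cycleModel_fiberShift]

theorem fiberCycleDiffs_le_map_ker [Fintype Ω] :
    fiberCycleDiffs p Ω ≤ (piProdHom _ Ω).ker.map (cycleModel p Ω) := by
  rw [fiberCycleDiffs, closure_le]
  rintro _ ⟨ω, ω', rfl⟩
  refine ⟨_, ?_, (fiberCycle_mul_inv_eq_cycleModel p Ω ω ω').symm⟩
  simp [piProdHom, fiberShift, Finset.prod_mul_distrib]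

theorem fiberCycleDiffs_le_range : fiberCycleDiffs p Ω ≤ (cycleModel p Ω).range := by
  rw [fiberCycleDiffs, closure_le]
  rintro _ ⟨ω, ω', rfl⟩
  exact ⟨_, (fiberCycle_mul_inv_eq_cycleModel p Ω ω ω').symm⟩

variable {p Ω}

theorem pow_eq_one_of_mem_fiberCycleDiffs {v : Perm (Fin p × Ω)}
    (hv : v ∈ fiberCycleDiffs p Ω) : v ^ p = 1 := by
  obtain ⟨f, rfl⟩ := fiberCycleDiffs_le_range p Ω hv
  suffices f ^ p = 1 by rw [← map_pow, this, map_one]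
  funext ω
  obtain ⟨n, hn⟩ := (f ω).2
  ext1
  simp only [Pi.pow_apply, SubgroupClass.coe_pow, ← hn, Pi.one_apply, OneMemClass.coe_one]
  rw [← zpow_natCast, ← zpow_mul, mul_comm, zpow_mul, zpow_natCast, cyclicShift_pow_self,
    one_zpow]

theorem commute_of_mem_fiberCycleDiffs {v w : Perm (Fin p × Ω)} (hv : v ∈ fiberCycleDiffs p Ω)
    (hw : w ∈ fiberCycleDiffs p Ω) : v * w = w * v := by
  obtain ⟨f, rfl⟩ := fiberCycleDiffs_le_range p Ω hv
  obtain ⟨g, rfl⟩ := fiberCycleDiffs_le_range p Ω hw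
  rw [← map_mul, mul_comm, map_mul]

theorem card_fiberCycleDiffs_le [Fintype Ω] [Nonempty Ω] (hp : 0 < p) :
    Nat.card (fiberCycleDiffs p Ω) ≤ p ^ (Fintype.card Ω - 1) := by
  have hshift : Nat.card (zpowers (cyclicShift p)) ≤ p := by
    rw [Nat.card_zpowers]
    exact orderOf_le_of_pow_eq_one hp (cyclicShift_pow_self p)
  calc Nat.card (fiberCycleDiffs p Ω)
      ≤ Nat.card ((piProdHom (zpowers (cyclicShift p)) Ω).ker.map (cycleModel p Ω)) :=
        Subgroup.card_le_of_le (fiberCycleDiffs_le_map_ker p Ω)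
    _ ≤ Nat.card (piProdHom (zpowers (cyclicShift p)) Ω).ker :=
        Nat.card_le_card_of_surjective _ ((cycleModel p Ω).subgroupMap_surjective _)
    _ ≤ Nat.card (zpowers (cyclicShift p)) ^ (Fintype.card Ω - 1) := card_ker_piProdHom_le
    _ ≤ p ^ (Fintype.card Ω - 1) := Nat.pow_le_pow_left hshift _

theorem fiberCycleDiffs_le_fiberPreserving :
    fiberCycleDiffs p Ω ≤ fiberPreserving (Fin p) Ω := by
  intro v hv
  obtain ⟨f, rfl⟩ := fiberCycleDiffs_le_range p Ω hv
  exact range_prodCongrLeftHom_le ⟨_, rfl⟩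

theorem range_prodCongrHom_le_normalizer :
    (prodCongrHom (Fin p) Ω).range ≤ normalizer (fiberCycleDiffs p Ω) := by
  rw [fiberCycleDiffs, le_normalizer_closure_iff]
  rintro _ ⟨σ, rfl⟩ _ ⟨ω, ω', rfl⟩
  refine subset_closure ⟨σ ω, σ ω', ?_⟩
  rw [← MulAut.conj_apply, map_mul, map_inv, prodCongrHom_conj_fiberCycle,
    prodCongrHom_conj_fiberCycle]

end FiberCycleDiffs

section EquivalentCopies

variable {p q r : ℕ} {Ω : Type} [DecidableEq Ω] {π : Tri p q r →* Perm Ω} {a b : Ω}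
  {φ : Tri p q r →* Perm (Fin p × Ω)}

theorem phiX_eq_prodCongrHom_mul : phiX p q r Ω π a b =
    prodCongrHom (Fin p) Ω (π (gx p q r)) * (fiberCycle p Ω a * (fiberCycle p Ω b)⁻¹) := by
  rw [phiX, mul_assoc, List.formPerm_reverse]
  rfl

theorem range_le_sup_fiberCycleDiffs (hφx : φ (gx p q r) = phiX p q r Ω π a b)
    (hφy : φ (gy p q r) = phiY p q r Ω π) :
    φ.range ≤ ((prodCongrHom (Fin p) Ω).comp π).range ⊔ fiberCycleDiffs p Ω := by
  rw [MonoidHom.range_eq_map, ← PresentedGroup.closure_range_of, MonoidHom.map_closure,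
    closure_le]
  rintro _ ⟨_, ⟨j, rfl⟩, rfl⟩
  fin_cases j
  · change φ (gx p q r) ∈ _
    rw [hφx, phiX_eq_prodCongrHom_mul]
    exact mul_mem (mem_sup_left ⟨gx p q r, rfl⟩)
      (mem_sup_right (subset_closure ⟨a, b, rfl⟩))
  · exact mem_sup_left ⟨gy p q r, hφy.symm⟩

theorem exists_eq_prodCongrHom_mul (hφx : φ (gx p q r) = phiX p q r Ω π a b)
    (hφy : φ (gy p q r) = phiY p q r Ω π) (g : Tri p q r) :
    ∃ c ∈ Set.range (fun g' => prodCongrHom (Fin p) Ω (π g')),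
      ∃ v ∈ fiberCycleDiffs p Ω, φ g = c * v := by
  have hnorm : ((prodCongrHom (Fin p) Ω).comp π).range ≤ normalizer (fiberCycleDiffs p Ω) := by
    rw [MonoidHom.range_comp]
    exact (map_le_range _ _).trans range_prodCongrHom_le_normalizer
  have hg := range_le_sup_fiberCycleDiffs hφx hφy ⟨g, rfl⟩
  rw [← SetLike.mem_coe, coe_mul_of_left_le_normalizer_right _ _ hnorm] at hg
  obtain ⟨c, hc, v, hv, hcv⟩ := hg
  exact ⟨c, hc, v, hv, hcv.symm⟩

theorem mem_fiberCycleDiffs_of_image_Bset (hp : 0 < p) (hφx : φ (gx p q r) = phiX p q r Ω π a b)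
    (hφy : φ (gy p q r) = phiY p q r Ω π) {g : Tri p q r}
    (hB : ∀ ω : Ω, ⇑(φ g) '' Bset p ω = Bset p ω) : φ g ∈ fiberCycleDiffs p Ω := by
  obtain ⟨_, ⟨g', rfl⟩, v, hv, hgv⟩ := exists_eq_prodCongrHom_mul hφx hφy g
  dsimp only at hgv
  have : Nonempty (Fin p) := Fin.pos_iff_nonempty.mp hp
  have hc : prodCongrHom (Fin p) Ω (π g') ∈ fiberPreserving (Fin p) Ω := by
    have := mul_mem (mem_fiberPreserving_of_image_Bset hB)
      (inv_mem (fiberCycleDiffs_le_fiberPreserving hv))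
    rwa [hgv, mul_inv_cancel_right] at this
  rwa [hgv, eq_one_of_prodCongrHom_mem_fiberPreserving hc, map_one, one_mul]

end EquivalentCopies

theorem kernel_elementary_abelian_general
    (p q r : ℕ) (hp : p.Prime)
    (Ω : Type) [Fintype Ω] [DecidableEq Ω]
    (π : Tri p q r →* Equiv.Perm Ω)
    (a b : Ω)
    (φ : Tri p q r →* Equiv.Perm (Fin p × Ω))
    (hφx : φ (gx p q r) = phiX p q r Ω π a b)
    (hφy : φ (gy p q r) = phiY p q r Ω π)
    :
    (∀ g : Tri p q r,
      ∃ c ∈ Set.range (fun g' : Tri p q r => prodCongrHom (Fin p) Ω (π g')),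
      ∃ v ∈ Subgroup.closure
        {u : Equiv.Perm (Fin p × Ω) |
          ∃ ω ω' : Ω, u = fiberCycle p Ω ω * (fiberCycle p Ω ω')⁻¹},
      φ g = c * v) ∧
    (∀ h : Equiv.Perm (Fin p × Ω),
      (∃ g : Tri p q r, φ g = h) → (∀ ω : Ω, ⇑h '' Bset p ω = Bset p ω) →
      h ∈ Subgroup.closure
        {u : Equiv.Perm (Fin p × Ω) |
          ∃ ω ω' : Ω, u = fiberCycle p Ω ω * (fiberCycle p Ω ω')⁻¹}) ∧
    (∀ h : Equiv.Perm (Fin p × Ω),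
      (∃ g : Tri p q r, φ g = h) → (∀ ω : Ω, ⇑h '' Bset p ω = Bset p ω) → h ^ p = 1) ∧
    (∀ h h' : Equiv.Perm (Fin p × Ω),
      (∃ g : Tri p q r, φ g = h) → (∀ ω : Ω, ⇑h '' Bset p ω = Bset p ω) →
      (∃ g : Tri p q r, φ g = h') → (∀ ω : Ω, ⇑h' '' Bset p ω = Bset p ω) →
      h * h' = h' * h) ∧
    Nat.card {h : Equiv.Perm (Fin p × Ω) |
        (∃ g : Tri p q r, φ g = h) ∧ ∀ ω : Ω, ⇑h '' Bset p ω = Bset p ω} ≤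
      p ^ (Fintype.card Ω - 1) := by
  have hN : ∀ h, (∃ g, φ g = h) → (∀ ω, ⇑h '' Bset p ω = Bset p ω) →
      h ∈ fiberCycleDiffs p Ω := by
    rintro _ ⟨g, rfl⟩ hB
    exact mem_fiberCycleDiffs_of_image_Bset hp.pos hφx hφy hB
  have : Nonempty Ω := ⟨a⟩
  refine ⟨exists_eq_prodCongrHom_mul hφx hφy, hN,
    fun h hg hB => pow_eq_one_of_mem_fiberCycleDiffs (hN h hg hB),
    fun h h' hg hB hg' hB' => commute_of_mem_fiberCycleDiffs (hN h hg hB) (hN h' hg' hB'), ?_⟩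
  calc _ ≤ Nat.card (fiberCycleDiffs p Ω) :=
        Nat.card_mono (Set.toFinite _) fun h hh => hN h hh.1 hh.2
    _ ≤ p ^ (Fintype.card Ω - 1) := card_fiberCycleDiffs_le hp.pos

theorem kernel_elementary_abelian
    (p q r k : ℕ) (hp : p.Prime) (hq : 0 < q) (hr : 0 < r) (hk : 0 < k)
    (Ω : Type) [Fintype Ω] [DecidableEq Ω]
    (π : Tri p q r →* Equiv.Perm Ω)
    (htrans : ∀ z z' : Ω, ∃ g : Tri p q r, π g z = z')
    (a b : Ω) (hab : a ≠ b)
    (hax : π (gx p q r) a = a) (hbx : π (gx p q r) b = b)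
    (hhandle : ((π (gx p q r * gy p q r)) ^ k) a = b)
    (hks : k < Nat.card {w : Ω | ∃ n : ℤ, ((π (gx p q r * gy p q r)) ^ n) a = w})
    (φ : Tri p q r →* Equiv.Perm (Fin p × Ω))
    (hφx : φ (gx p q r) = phiX p q r Ω π a b)
    (hφy : φ (gy p q r) = phiY p q r Ω π)
    :
    (∀ g : Tri p q r,
      ∃ c ∈ Set.range (fun g' : Tri p q r => prodCongrHom (Fin p) Ω (π g')),
      ∃ v ∈ Subgroup.closure
        {u : Equiv.Perm (Fin p × Ω) |
          ∃ ω ω' : Ω, u = fiberCycle p Ω ω * (fiberCycle p Ω ω')⁻¹},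
      φ g = c * v) ∧
    (∀ h : Equiv.Perm (Fin p × Ω),
      (∃ g : Tri p q r, φ g = h) → (∀ ω : Ω, ⇑h '' Bset p ω = Bset p ω) →
      h ∈ Subgroup.closure
        {u : Equiv.Perm (Fin p × Ω) |
          ∃ ω ω' : Ω, u = fiberCycle p Ω ω * (fiberCycle p Ω ω')⁻¹}) ∧
    (∀ h : Equiv.Perm (Fin p × Ω),
      (∃ g : Tri p q r, φ g = h) → (∀ ω : Ω, ⇑h '' Bset p ω = Bset p ω) → h ^ p = 1) ∧
    (∀ h h' : Equiv.Perm (Fin p × Ω),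
      (∃ g : Tri p q r, φ g = h) → (∀ ω : Ω, ⇑h '' Bset p ω = Bset p ω) →
      (∃ g : Tri p q r, φ g = h') → (∀ ω : Ω, ⇑h' '' Bset p ω = Bset p ω) →
      h * h' = h' * h) ∧
    Nat.card {h : Equiv.Perm (Fin p × Ω) |
        (∃ g : Tri p q r, φ g = h) ∧ ∀ ω : Ω, ⇑h '' Bset p ω = Bset p ω} ≤
      p ^ (Fintype.card Ω - 1) :=
  kernel_elementary_abelian_general p q r hp Ω π a b φ hφx hφy
end

section
/- In the equivalent-copies construction, H is isomorphic to a subgroup of the wreath product C_p ≀ Sym(Ω) = ((ℤ/pℤ)^Ω) ⋊ Sym(Ω), where Sym(Ω) acts on (ℤ/pℤ)^Ω by permuting coordinates: there is an injective group homomorphism θ : H → ((ℤ/pℤ)^Ω) ⋊ Sym(Ω) such that the composition of θ with the projection to Sym(Ω) has image π(Δ(p,q,r)) and kernel N, and θ(N) ⊆ (ℤ/pℤ)^Ω. In particular N is elementary abelian of order at most p^{deg}. -/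
/-!
The wreath product `C_p ≀ Sym(Ω)` acts faithfully on `Fin p × Ω`, with `(v, σ)` sending `(i, ω)`
to `(i + v (σ ω), σ ω)`. Both generators of `H` are images of explicit elements: `φ_y` of
`(1, π y)`, and `φ_x` of `(1, π x) · δ_a · δ_b⁻¹`, because the cycle `(a_1,…,a_p)` is translation
by `1` in the fibre over `a` and `(b_p,…,b_1)` is its inverse over `b`. Hence `H` lies in the image
of the embedding, and `θ` is its inverse there. The blocks `B_ω` are the fibres, which `(v, σ)`
permutes through `σ`; so the projection to `Sym(Ω)` is the action on `ℬ`, it agrees with `π` on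
the generators, and `N` lands in the base group `(ℤ/pℤ)^Ω`, elementary abelian of order `p^|Ω|`.
-/

open Equiv

/-- The action of `Sym(Ω)` on `G^Ω` by permuting coordinates. -/
def coordAct (Ω : Type) (G : Type) [Group G] :
    Equiv.Perm Ω →* MulAut (Ω → G) where
  toFun σ :=
    { toFun := fun v => v ∘ σ.symm
      invFun := fun v => v ∘ σ
      left_inv := fun v => by ext ω; simp
      right_inv := fun v => by ext ω; simp
      map_mul' := fun v w => rfl }
  map_one' := by
    apply MulEquiv.ext; intro v; rfl
  map_mul' σ τ := by
    apply MulEquiv.ext; intro v; rfl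

section Wreath

variable {G α : Type} [Group G] (Ω : Type) (ρ : G →* Perm α)

def wreathPerm : (Ω → G) ⋊[coordAct Ω G] Perm Ω →* Perm (α × Ω) where
  toFun w := Equiv.prodCongrLeft (fun ω => ρ (w.left ω)) * prodCongrHom α Ω w.right
  map_one' := by ext ⟨i, ω⟩ <;> simp [prodCongrHom]
  map_mul' v w := by
    ext ⟨i, ω⟩
    · simp only [Perm.mul_apply, prodCongrHom]
      rw [SemidirectProduct.mul_left, SemidirectProduct.mul_right]
      simp [coordAct]
    · rfl

variable {Ω ρ}

@[simp]
lemma wreathPerm_apply (w : (Ω → G) ⋊[coordAct Ω G] Perm Ω) (i : α) (ω : Ω) :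
    wreathPerm Ω ρ w (i, ω) = (ρ (w.left (w.right ω)) i, w.right ω) :=
  rfl

lemma wreathPerm_injective [Nonempty α] (hρ : Function.Injective ρ) :
    Function.Injective (wreathPerm Ω ρ) := by
  intro v w hvw
  have hright : v.right = w.right := Equiv.ext fun ω => by
    simpa using congrArg Prod.snd (DFunLike.congr_fun hvw (Classical.arbitrary α, ω))
  refine SemidirectProduct.ext (funext fun ω => hρ (Equiv.ext fun i => ?_)) hright
  obtain ⟨ω', rfl⟩ := v.right.surjective ω
  simpa [hright] using congrArg Prod.fst (DFunLike.congr_fun hvw (i, ω'))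

lemma wreathPerm_inr (σ : Perm Ω) :
    wreathPerm Ω ρ (SemidirectProduct.inr σ) = prodCongrHom α Ω σ := by
  ext ⟨i, ω⟩ <;> simp [prodCongrHom]

end Wreath

section Fibers

variable {p : ℕ} {Ω : Type}

lemma image_Bset_wreathPerm {G : Type} [Group G] (ρ : G →* Perm (Fin p))
    (w : (Ω → G) ⋊[coordAct Ω G] Perm Ω) (ω : Ω) :
    ⇑(wreathPerm Ω ρ w) '' Bset p ω = Bset p (w.right ω) := by
  ext ⟨j, ω'⟩
  simp only [Bset, Set.mem_image, Set.mem_range, exists_exists_eq_and, wreathPerm_apply,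
    Prod.mk.injEq]
  constructor
  · rintro ⟨_, _, h⟩
    exact ⟨j, rfl, h⟩
  · rintro ⟨_, rfl, h⟩
    exact ⟨(ρ (w.left (w.right ω))).symm _, Equiv.apply_symm_apply _ _, h⟩

lemma Bset_injective [NeZero p] : Function.Injective (Bset p : Ω → Set (Fin p × Ω)) := by
  intro ω ω' h
  obtain ⟨i, hi⟩ : ((0 : Fin p), ω) ∈ Bset p ω' := h ▸ ⟨0, rfl⟩
  exact congrArg Prod.snd hi.symm

variable (p) [NeZero p]

def finTranslation : Multiplicative (ZMod p) →* Perm (Fin p) where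
  toFun z := Equiv.addRight ((ZMod.finEquiv p).symm z.toAdd)
  map_one' := by ext; simp
  map_mul' y z := by ext; simp only [toAdd_mul, map_add, Perm.mul_apply, coe_addRight]; abel_nf

lemma finTranslation_injective : Function.Injective (finTranslation p) := by
  intro y z h
  simpa [finTranslation] using DFunLike.congr_fun h 0

variable [DecidableEq Ω]

lemma fiberCycle_eq_wreathPerm (ω : Ω) :
    fiberCycle p Ω ω =
      wreathPerm Ω (finTranslation p) (SemidirectProduct.inl (Pi.mulSingle ω (.ofAdd 1))) := by
  ext ⟨i, ω'⟩ : 1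
  rw [wreathPerm_apply, fiberCycle]
  simp only [SemidirectProduct.left_inl, SemidirectProduct.right_inl, Perm.one_apply]
  obtain rfl | h := eq_or_ne ω' ω
  · have hcycle := List.formPerm_apply_getElem (List.ofFn fun j : Fin p => (j, ω'))
      (List.nodup_ofFn.2 (Prod.mk_left_injective ω')) i.val (by simp)
    simp only [List.getElem_ofFn, Fin.eta, List.length_ofFn] at hcycle
    rw [hcycle]
    exact Prod.ext (Fin.ext (by simp [finTranslation, Fin.val_add])) rfl
  · rw [List.formPerm_apply_of_notMem (by simpa using h.symm)]
    simp [h]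

end Fibers

lemma phiX_eq_wreathPerm {p q r : ℕ} [NeZero p] {Ω : Type} [DecidableEq Ω]
    (π : Tri p q r →* Perm Ω) (a b : Ω) :
    phiX p q r Ω π a b = wreathPerm Ω (finTranslation p)
      (.inr (π (gx p q r)) * .inl (Pi.mulSingle a (.ofAdd 1)) *
        (.inl (Pi.mulSingle b (.ofAdd 1)))⁻¹) := by
  rw [phiX, List.formPerm_reverse, map_mul, map_mul, map_inv, wreathPerm_inr,
    ← fiberCycle_eq_wreathPerm, ← fiberCycle_eq_wreathPerm, fiberCycle, fiberCycle]

lemma phiY_eq_wreathPerm {p q r : ℕ} [NeZero p] {Ω : Type} (π : Tri p q r →* Perm Ω) :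
    phiY p q r Ω π = wreathPerm Ω (finTranslation p) (.inr (π (gy p q r))) := by
  rw [phiY, wreathPerm_inr]

lemma PresentedGroup.range_le {ι G : Type*} [Group G] {rels : Set (FreeGroup ι)}
    (f : PresentedGroup rels →* G) {H : Subgroup G} (h : ∀ i, f (PresentedGroup.of i) ∈ H) :
    f.range ≤ H := by
  rw [MonoidHom.range_eq_map, ← PresentedGroup.closure_range_of, MonoidHom.map_closure,
    Subgroup.closure_le]
  rintro _ ⟨_, ⟨i, rfl⟩, rfl⟩
  exact h i

namespace MonoidHom

variable {W P : Type*} [Group W] [Group P] {Θ : W →* P} (hΘ : Function.Injective Θ)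
  {K : Subgroup P} (hK : K ≤ Θ.range)

noncomputable def invOfLERange : K →* W :=
  (MonoidHom.ofInjective hΘ).symm.toMonoidHom.comp (Subgroup.inclusion hK)

@[simp]
lemma apply_invOfLERange (h : K) : Θ (invOfLERange hΘ hK h) = h := by
  rw [← MonoidHom.ofInjective_apply hΘ]
  simp [invOfLERange]

lemma invOfLERange_eq {h : K} {w : W} (hw : Θ w = h) : invOfLERange hΘ hK h = w :=
  hΘ (by rw [apply_invOfLERange, hw])

lemma invOfLERange_injective : Function.Injective (invOfLERange hΘ hK) :=
  fun h h' hh => Subtype.ext (by rw [← apply_invOfLERange hΘ hK h, hh, apply_invOfLERange])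

end MonoidHom

namespace SemidirectProduct

variable {N G : Type*} [Group N] [Group G] {φ : G →* MulAut N}

lemma eq_inl_of_right_eq_one {w : N ⋊[φ] G} (hw : w.right = 1) : w = inl w.left :=
  SemidirectProduct.ext rfl hw

lemma card_le_of_right_eq_one [Finite N] {X : Type*} {f : X → N ⋊[φ] G}
    (hf : Function.Injective f) (h1 : ∀ x, (f x).right = 1) : Nat.card X ≤ Nat.card N :=
  Nat.card_le_card_of_injective (fun x => (f x).left) fun x y hxy =>
    hf <| by
      rw [eq_inl_of_right_eq_one (h1 x), eq_inl_of_right_eq_one (h1 y)]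
      exact congrArg inl hxy

end SemidirectProduct

section Kernel

variable {p : ℕ} {Ω : Type}

lemma pow_eq_one_of_right_eq_one
    {w : (Ω → Multiplicative (ZMod p)) ⋊[coordAct Ω (Multiplicative (ZMod p))] Perm Ω}
    (hw : w.right = 1) : w ^ p = 1 := by
  have hleft : w.left ^ p = 1 :=
    funext fun ω => Multiplicative.toAdd.injective (by simp [toAdd_pow])
  rw [SemidirectProduct.eq_inl_of_right_eq_one hw, ← map_pow, hleft, map_one]

lemma forall_image_Bset_eq_iff [NeZero p] {G : Type} [Group G] (ρ : G →* Perm (Fin p))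
    (w : (Ω → G) ⋊[coordAct Ω G] Perm Ω) :
    (∀ ω, ⇑(wreathPerm Ω ρ w) '' Bset p ω = Bset p ω) ↔ w.right = 1 := by
  simp only [image_Bset_wreathPerm, Bset_injective.eq_iff, Perm.ext_iff, Perm.one_apply]

end Kernel

theorem embeds_in_wreath_product_general
    (p q r : ℕ) (hp : p.Prime)
    (Ω : Type) [Fintype Ω] [DecidableEq Ω]
    (π : Tri p q r →* Equiv.Perm Ω)
    (a b : Ω)
    (φ : Tri p q r →* Equiv.Perm (Fin p × Ω))
    (hφx : φ (gx p q r) = phiX p q r Ω π a b)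
    (hφy : φ (gy p q r) = phiY p q r Ω π)
    :
    ∃ θ : φ.range →*
        (Ω → Multiplicative (ZMod p)) ⋊[coordAct Ω (Multiplicative (ZMod p))] Equiv.Perm Ω,
      Function.Injective θ ∧
      (SemidirectProduct.rightHom.comp θ).range = π.range ∧
      (∀ h : φ.range,
        SemidirectProduct.rightHom (θ h) = 1 ↔
          ∀ ω : Ω, ⇑(h : Equiv.Perm (Fin p × Ω)) '' Bset p ω = Bset p ω) ∧
      (∀ h : φ.range,
        (∀ ω : Ω, ⇑(h : Equiv.Perm (Fin p × Ω)) '' Bset p ω = Bset p ω) → h ^ p = 1) ∧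
      Nat.card {h : φ.range |
          ∀ ω : Ω, ⇑(h : Equiv.Perm (Fin p × Ω)) '' Bset p ω = Bset p ω} ≤
        p ^ Fintype.card Ω := by
  have : NeZero p := ⟨hp.ne_zero⟩
  set Θ := wreathPerm Ω (finTranslation p)
  have hΘ : Function.Injective Θ := wreathPerm_injective (finTranslation_injective p)
  have hgen : ∀ i, ∃ w, Θ w = φ (PresentedGroup.of i) ∧
      w.right = π (PresentedGroup.of i) := by
    intro i
    fin_cases i
    · exact ⟨_, (hφx.trans (phiX_eq_wreathPerm π a b)).symm, by simp [gx]⟩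
    · exact ⟨_, (hφy.trans (phiY_eq_wreathPerm π)).symm, by simp [gy]⟩
  have hle : φ.range ≤ Θ.range :=
    PresentedGroup.range_le φ fun i => (hgen i).imp fun _ hw => hw.1
  set θ := MonoidHom.invOfLERange hΘ hle
  have hblocks (h : φ.range) :
      (∀ ω, ⇑(h : Perm (Fin p × Ω)) '' Bset p ω = Bset p ω) ↔ (θ h).right = 1 := by
    conv_lhs => rw [← MonoidHom.apply_invOfLERange hΘ hle h]
    exact forall_image_Bset_eq_iff _ _
  have hπ : (SemidirectProduct.rightHom.comp θ).comp φ.rangeRestrict = π := by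
    refine PresentedGroup.ext fun i => ?_
    obtain ⟨w, hw, hright⟩ := hgen i
    simp [θ, MonoidHom.invOfLERange_eq hΘ hle (h := φ.rangeRestrict _) hw, hright]
  refine ⟨θ, MonoidHom.invOfLERange_injective hΘ hle, ?_, fun h => (hblocks h).symm,
    fun h hh => MonoidHom.invOfLERange_injective hΘ hle ?_, ?_⟩
  · rw [← hπ, MonoidHom.range_comp _ φ.rangeRestrict,
      φ.rangeRestrict.range_eq_top_of_surjective φ.rangeRestrict_surjective,
      ← MonoidHom.range_eq_map]
  · rw [map_pow, pow_eq_one_of_right_eq_one ((hblocks h).1 hh), map_one]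
  · calc _ ≤ Nat.card (Ω → Multiplicative (ZMod p)) :=
          SemidirectProduct.card_le_of_right_eq_one
            ((MonoidHom.invOfLERange_injective hΘ hle).comp Subtype.val_injective)
            fun h => (hblocks h).1 h.2
      _ = p ^ Fintype.card Ω := by simp

theorem embeds_in_wreath_product
    (p q r k : ℕ) (hp : p.Prime) (hq : 0 < q) (hr : 0 < r) (hk : 0 < k)
    (Ω : Type) [Fintype Ω] [DecidableEq Ω]
    (π : Tri p q r →* Equiv.Perm Ω)
    (htrans : ∀ z z' : Ω, ∃ g : Tri p q r, π g z = z')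
    (a b : Ω) (hab : a ≠ b)
    (hax : π (gx p q r) a = a) (hbx : π (gx p q r) b = b)
    (hhandle : ((π (gx p q r * gy p q r)) ^ k) a = b)
    (hks : k < Nat.card {w : Ω | ∃ n : ℤ, ((π (gx p q r * gy p q r)) ^ n) a = w})
    (φ : Tri p q r →* Equiv.Perm (Fin p × Ω))
    (hφx : φ (gx p q r) = phiX p q r Ω π a b)
    (hφy : φ (gy p q r) = phiY p q r Ω π)
    :
    ∃ θ : φ.range →*
        (Ω → Multiplicative (ZMod p)) ⋊[coordAct Ω (Multiplicative (ZMod p))] Equiv.Perm Ω,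
      Function.Injective θ ∧
      (SemidirectProduct.rightHom.comp θ).range = π.range ∧
      (∀ h : φ.range,
        SemidirectProduct.rightHom (θ h) = 1 ↔
          ∀ ω : Ω, ⇑(h : Equiv.Perm (Fin p × Ω)) '' Bset p ω = Bset p ω) ∧
      (∀ h : φ.range,
        (∀ ω : Ω, ⇑(h : Equiv.Perm (Fin p × Ω)) '' Bset p ω = Bset p ω) → h ^ p = 1) ∧
      Nat.card {h : φ.range |
          ∀ ω : Ω, ⇑(h : Equiv.Perm (Fin p × Ω)) '' Bset p ω = Bset p ω} ≤
        p ^ Fintype.card Ω :=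
  embeds_in_wreath_product_general p q r hp Ω π a b φ hφx hφy
end

section
/- In the equivalent-copies construction, assume in addition that p ≤ q ≤ r, that deg > 6, and that π(Δ(p,q,r)) = Alt(Ω), the full alternating group on Ω. Then N ≠ 1, i.e. the kernel of the action of H on the block system ℬ is nontrivial. -/
open Equiv

/-!
If `N = 1`, then every element of `ker π` fixes all blocks and is therefore trivial, so `φ`
factors through `π(Δ) = Alt(Ω)`: the alternating group acts on `𝒰 = Fin p × Ω`, lifting its
action on `Ω`. The stabiliser `Alt(Ω ∖ {a})` of `a` permutes the `p` points of the block `B_a`,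
and `π(x)` lies in it and moves a point of `B_a`; as `Alt(n - 1)` is simple for `n - 1 ≥ 5`, it
embeds into `Sym(p)`, so `(n - 1)! ≤ 2 p!`. But `π(x)` has prime order `p` and fixes `a` and `b`,
so `p ≤ n - 2`, and `(n - 1)! ≤ 2 (n - 2)!` forces `n ≤ 3`.
-/

open Equiv.Perm

section Fibers

variable {ι α : Type*}

theorem snd_formPerm_apply [DecidableEq ι] [DecidableEq α] {l : List (ι × α)} {c : α}
    (hl : ∀ w ∈ l, w.2 = c) (z : ι × α) : (l.formPerm z).2 = z.2 := by
  by_cases hz : z ∈ l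
  · rw [hl _ (List.formPerm_apply_mem_of_mem hz), hl _ hz]
  · rw [List.formPerm_apply_of_notMem hz]

theorem snd_inv_apply_of_forall_snd {h : Perm (ι × α)} (hh : ∀ z, (h z).2 = z.2)
    (z : ι × α) : (h⁻¹ z).2 = z.2 := by
  simpa using (hh (h⁻¹ z)).symm

def fiberPerm {K : Type*} [Group K] (Ψ : K →* Perm (ι × α)) (a : α)
    (hΨ : ∀ k i, (Ψ k (i, a)).2 = a) : K →* Perm ι :=
  have hmk (k : K) (i : ι) : ((Ψ k (i, a)).1, a) = Ψ k (i, a) := Prod.ext rfl (hΨ k i).symm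
  { toFun k :=
      { toFun := fun i => (Ψ k (i, a)).1
        invFun := fun i => (Ψ k⁻¹ (i, a)).1
        left_inv := fun i => by dsimp only; rw [hmk, map_inv, Perm.inv_def, symm_apply_apply]
        right_inv := fun i => by dsimp only; rw [hmk, map_inv, Perm.inv_def, apply_symm_apply] }
    map_one' := by ext; simp
    map_mul' := fun k l => by ext i; simp [hmk] }

theorem fiberPerm_apply {K : Type*} [Group K] (Ψ : K →* Perm (ι × α)) (a : α)
    (hΨ : ∀ k i, (Ψ k (i, a)).2 = a) (k : K) (i : ι) :
    Ψ k (i, a) = (fiberPerm Ψ a hΨ k i, a) :=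
  Prod.ext rfl (hΨ k i)

end Fibers

theorem MonoidHom.injective_of_ne_one {G H : Type*} [Group G] [IsSimpleGroup G] [Group H]
    (f : G →* H) (hf : f ≠ 1) : Function.Injective f :=
  f.ker_eq_bot_iff.mp <|
    f.normal_ker.eq_bot_or_eq_top.resolve_right (mt MonoidHom.ker_eq_top_iff.mp hf)

theorem MonoidHom.exists_lift_of_range_eq {G K H : Type*} [Group G] [Group K] [Group H]
    {π : G →* K} {S : Subgroup K} (hπ : π.range = S) {φ : G →* H}
    (hker : π.ker ≤ φ.ker) :
    ∃ Φ : S →* H, ∀ g (hg : π g ∈ S), Φ ⟨π g, hg⟩ = φ g := by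
  have hS (g : G) : π g ∈ S := hπ ▸ ⟨g, rfl⟩
  set f := π.codRestrict S hS
  have hf : Function.Surjective f := by
    rintro ⟨σ, hσ⟩
    obtain ⟨g, rfl⟩ := (hπ ▸ hσ : σ ∈ π.range)
    exact ⟨g, rfl⟩
  refine ⟨f.liftOfSurjective hf ⟨φ, by rwa [MonoidHom.ker_codRestrict]⟩, fun g _ => ?_⟩
  exact f.liftOfRightInverse_comp_apply _ _ _ g

theorem Equiv.Perm.le_card_support_of_pow_prime_eq_one {α : Type*} [Fintype α]
    [DecidableEq α] {σ : Perm α} {p : ℕ} (hp : p.Prime) (hσp : σ ^ p = 1) (hσ : σ ≠ 1) :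
    p ≤ σ.support.card := by
  have := Fact.mk hp
  obtain ⟨c, hc⟩ := Multiset.exists_mem_of_ne_zero (mt cycleType_eq_zero.mp hσ)
  exact pow_prime_eq_one_iff.mp hσp c hc ▸ le_card_support_of_mem_cycleType hc

-- `Alt(α ∖ {a})` acts on the fiber above `a`, nontrivially, hence faithfully by simplicity.
theorem factorial_card_sub_one_le {ι α : Type*} [Fintype ι] [Fintype α] [DecidableEq α]
    (Φ : alternatingGroup α →* Perm (ι × α))
    (hΦ : ∀ σ z, (Φ σ z).2 = (σ : Perm α) z.2)
    (h6 : 6 ≤ Fintype.card α) {a : α} {σ : alternatingGroup α} (hσa : (σ : Perm α) a = a)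
    {i : ι} (hσi : Φ σ (i, a) ≠ (i, a)) :
    (Fintype.card α - 1).factorial ≤ 2 * (Fintype.card ι).factorial := by
  set s : Finset α := {a}ᶜ
  have hs : Fintype.card s = Fintype.card α - 1 := by
    rw [Fintype.card_coe, Finset.card_compl, Finset.card_singleton]
  let Ψ := Φ.comp (alternatingGroup.ofSubtype s)
  have hΨ (τ : alternatingGroup s) (j : ι) : (Ψ τ (j, a)).2 = a := by
    rw [MonoidHom.comp_apply, hΦ, alternatingGroup.coe_ofSubtype]
    exact ofSubtype_apply_of_not_mem _ (by simp [s])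
  obtain ⟨τ, hτ⟩ : σ ∈ (alternatingGroup.ofSubtype s).range := by
    rw [alternatingGroup.mem_range_ofSubtype_iff]
    intro x hx
    simpa [s] using fun h : x = a => mem_support.mp hx (h ▸ hσa)
  have hinj : Function.Injective (fiberPerm Ψ a hΨ) := by
    have := alternatingGroup.isSimpleGroup (α := s) (by rw [Nat.card_eq_fintype_card]; omega)
    refine MonoidHom.injective_of_ne_one _ fun h => hσi ?_
    rw [← hτ, ← MonoidHom.comp_apply, fiberPerm_apply Ψ a hΨ, h]
    rfl
  have : Nontrivial s := Fintype.one_lt_card_iff_nontrivial.mp (by omega)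
  calc (Fintype.card α - 1).factorial = 2 * Nat.card (alternatingGroup s) := by
        rw [two_mul_nat_card_alternatingGroup, Nat.card_perm, Nat.card_eq_fintype_card, hs]
    _ ≤ 2 * (Fintype.card ι).factorial := by
        rw [← Nat.card_eq_fintype_card, ← Nat.card_perm]
        exact Nat.mul_le_mul_left 2 (Nat.card_le_card_of_injective _ hinj)

theorem Equiv.Perm.le_card_sub_two_of_pow_prime_eq_one {α : Type*} [Fintype α]
    [DecidableEq α] {σ : Perm α} {p : ℕ} (hp : p.Prime) (hσp : σ ^ p = 1) (hσ : σ ≠ 1)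
    {a b : α} (hab : a ≠ b) (ha : σ a = a) (hb : σ b = b) : p ≤ Fintype.card α - 2 := by
  have hsupp : σ.support ⊆ {a, b}ᶜ := fun x hx => by
    simp only [Finset.mem_compl, Finset.mem_insert, Finset.mem_singleton, not_or]
    exact ⟨fun h => mem_support.mp hx (h ▸ ha), fun h => mem_support.mp hx (h ▸ hb)⟩
  calc p ≤ σ.support.card := le_card_support_of_pow_prime_eq_one hp hσp hσ
    _ ≤ ({a, b}ᶜ : Finset α).card := Finset.card_le_card hsupp
    _ = Fintype.card α - 2 := by rw [Finset.card_compl, Finset.card_pair hab]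

theorem le_three_of_factorial_sub_one_le {n p : ℕ} (hp : p ≤ n - 2)
    (h : (n - 1).factorial ≤ 2 * p.factorial) : n ≤ 3 := by
  by_contra! hn
  obtain ⟨m, rfl⟩ : ∃ m, n = m + 2 := ⟨n - 2, by omega⟩
  rw [show m + 2 - 1 = m + 1 by omega, Nat.factorial_succ] at h
  have := Nat.factorial_le (show p ≤ m by omega)
  have := Nat.factorial_pos m
  nlinarith

theorem gx_pow_eq_one (p q r : ℕ) : gx p q r ^ p = 1 := by
  rw [gx, PresentedGroup.of, ← map_pow]
  exact PresentedGroup.one_of_mem (Set.mem_insert _ _)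

theorem mem_Bset {p : ℕ} {Ω : Type} {ω : Ω} {z : Fin p × Ω} : z ∈ Bset p ω ↔ z.2 = ω :=
  ⟨by rintro ⟨i, rfl⟩; rfl, fun h => ⟨z.1, Prod.ext rfl h.symm⟩⟩

theorem image_Bset_of_forall_snd {p : ℕ} {Ω : Type} {h : Perm (Fin p × Ω)}
    (hh : ∀ z, (h z).2 = z.2) (ω : Ω) : h '' Bset p ω = Bset p ω := by
  ext z
  rw [Equiv.image_eq_preimage_symm, Set.mem_preimage, mem_Bset, mem_Bset, ← Perm.inv_def,
    snd_inv_apply_of_forall_snd hh]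

theorem snd_prodCongrHom_apply {ι Ω : Type} (σ : Perm Ω) (z : ι × Ω) :
    (prodCongrHom ι Ω σ z).2 = σ z.2 :=
  rfl

section Construction

variable {p q r : ℕ} {Ω : Type} [DecidableEq Ω] {π : Tri p q r →* Perm Ω}

theorem snd_phiX_apply (a b : Ω) (z : Fin p × Ω) :
    (phiX p q r Ω π a b z).2 = π (gx p q r) z.2 := by
  rw [phiX, Perm.mul_apply, Perm.mul_apply, snd_prodCongrHom_apply, fiberCycle,
    snd_formPerm_apply (c := a), snd_formPerm_apply (c := b)]
  · simp
  · simp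

theorem fiberCycle_apply_ne (hp : 2 ≤ p) (ω : Ω) (i : Fin p) :
    fiberCycle p Ω ω (i, ω) ≠ (i, ω) := by
  refine (List.formPerm_apply_mem_ne_self_iff _ ?_ (i, ω) (List.mem_ofFn.mpr ⟨i, rfl⟩)).mpr ?_
  · exact List.nodup_ofFn.mpr fun i j h => congrArg Prod.fst h
  · simpa using hp

theorem phiX_apply_ne (hp : 2 ≤ p) {a b : Ω} (hab : a ≠ b) (hax : π (gx p q r) a = a)
    (i : Fin p) : phiX p q r Ω π a b (i, a) ≠ (i, a) := by
  have hb : ((List.ofFn fun j : Fin p => ((j, b) : Fin p × Ω)).reverse).formPerm (i, a) =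
      (i, a) :=
    List.formPerm_apply_of_notMem (by simp [hab.symm])
  have hfix : ∀ w : Fin p × Ω, w.2 = a → prodCongrHom (Fin p) Ω (π (gx p q r)) w = w :=
    fun w hw => Prod.ext rfl (by rw [snd_prodCongrHom_apply, hw, hax])
  rw [phiX, Perm.mul_apply, Perm.mul_apply, hb, hfix _ (snd_formPerm_apply (c := a) (by simp) _)]
  exact fiberCycle_apply_ne hp a i

theorem snd_apply_of_phi (φ : Tri p q r →* Perm (Fin p × Ω)) {a b : Ω}
    (hφx : φ (gx p q r) = phiX p q r Ω π a b) (hφy : φ (gy p q r) = phiY p q r Ω π)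
    (g : Tri p q r) (z : Fin p × Ω) : (φ g z).2 = π g z.2 := by
  have hg : g ∈ Subgroup.closure (Set.range PresentedGroup.of) := by simp
  induction hg using Subgroup.closure_induction generalizing z with
  | mem _ hx =>
    obtain ⟨i, rfl⟩ := hx
    fin_cases i
    · exact hφx ▸ snd_phiX_apply a b z
    · exact hφy ▸ snd_prodCongrHom_apply _ z
  | one => simp
  | mul g h _ _ ihg ihh => simp only [map_mul, Perm.mul_apply, ihg, ihh]
  | inv g _ ih =>
    rw [map_inv, map_inv, Perm.eq_inv_iff_eq, ← ih, Perm.inv_def, apply_symm_apply]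

end Construction

theorem kernel_nontrivial_alternating_general
    (p q r : ℕ) (hp : p.Prime)
    (Ω : Type) [Fintype Ω] [DecidableEq Ω]
    (π : Tri p q r →* Equiv.Perm Ω)
    (a b : Ω) (hab : a ≠ b)
    (hax : π (gx p q r) a = a) (hbx : π (gx p q r) b = b)
    (φ : Tri p q r →* Equiv.Perm (Fin p × Ω))
    (hφx : φ (gx p q r) = phiX p q r Ω π a b)
    (hφy : φ (gy p q r) = phiY p q r Ω π)
    (hdeg : 6 < Fintype.card Ω)
    (hrange : π.range = alternatingGroup Ω) :
    ∃ h : Equiv.Perm (Fin p × Ω), h ≠ 1 ∧ (∃ g : Tri p q r, φ g = h) ∧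
      ∀ ω : Ω, ⇑h '' Bset p ω = Bset p ω := by
  by_contra! hN
  have hcov := snd_apply_of_phi φ hφx hφy
  have hker : π.ker ≤ φ.ker := fun g hg => by
    by_contra hφg
    obtain ⟨ω, hω⟩ := hN (φ g) hφg ⟨g, rfl⟩
    exact hω (image_Bset_of_forall_snd (fun z => by rw [hcov, MonoidHom.mem_ker.mp hg]; rfl) ω)
  obtain ⟨Φ, hΦ⟩ := MonoidHom.exists_lift_of_range_eq hrange hker
  have hΦcov : ∀ σ z, (Φ σ z).2 = (σ : Perm Ω) z.2 := by
    rintro ⟨σ, hσ⟩ z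
    obtain ⟨g, rfl⟩ := (hrange ▸ hσ : σ ∈ π.range)
    rw [hΦ, hcov]
  have hmove : φ (gx p q r) (⟨0, hp.pos⟩, a) ≠ (⟨0, hp.pos⟩, a) :=
    hφx ▸ phiX_apply_ne hp.two_le hab hax _
  have hpn : p ≤ Fintype.card Ω - 2 := by
    refine Perm.le_card_sub_two_of_pow_prime_eq_one hp ?_ (fun h1 => hmove ?_) hab hax hbx
    · rw [← map_pow, gx_pow_eq_one, map_one]
    · rw [hker h1]; rfl
  have hfact := factorial_card_sub_one_le Φ hΦcov hdeg.le
    (σ := ⟨π (gx p q r), hrange ▸ ⟨_, rfl⟩⟩) hax (by rwa [hΦ])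
  have := le_three_of_factorial_sub_one_le hpn (by simpa using hfact)
  omega

theorem kernel_nontrivial_alternating
    (p q r k : ℕ) (hp : p.Prime) (hq : 0 < q) (hr : 0 < r) (hk : 0 < k)
    (Ω : Type) [Fintype Ω] [DecidableEq Ω]
    (π : Tri p q r →* Equiv.Perm Ω)
    (htrans : ∀ z z' : Ω, ∃ g : Tri p q r, π g z = z')
    (a b : Ω) (hab : a ≠ b)
    (hax : π (gx p q r) a = a) (hbx : π (gx p q r) b = b)
    (hhandle : ((π (gx p q r * gy p q r)) ^ k) a = b)
    (hks : k < Nat.card {w : Ω | ∃ n : ℤ, ((π (gx p q r * gy p q r)) ^ n) a = w})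
    (φ : Tri p q r →* Equiv.Perm (Fin p × Ω))
    (hφx : φ (gx p q r) = phiX p q r Ω π a b)
    (hφy : φ (gy p q r) = phiY p q r Ω π)
    (hpq : p ≤ q) (hqr : q ≤ r)
    (hdeg : 6 < Fintype.card Ω)
    (hrange : π.range = alternatingGroup Ω) :
    ∃ h : Equiv.Perm (Fin p × Ω), h ≠ 1 ∧ (∃ g : Tri p q r, φ g = h) ∧
      ∀ ω : Ω, ⇑h '' Bset p ω = Bset p ω :=
  kernel_nontrivial_alternating_general p q r hp Ω π a b hab hax hbx φ hφx hφy hdeg hrange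
end

section
/- Let p, q, r be positive integers with p prime and p ≤ q ≤ r, and let Ω be a finite set with |Ω| = deg > 6. Assume that p does not divide qr and p does not divide deg. Suppose there is a surjective group homomorphism π : Δ(p,q,r) → Alt(Ω) ≤ Sym(Ω) admitting, for some integer k > 0, a k-handle [a,b] with a ≠ b and with k strictly smaller than the size of the orbit of a under ⟨π(x)π(y)⟩. Then Δ(p,q,r) also has a quotient isomorphic to the semidirect product W ⋊ Alt(Ω), where W = {v : Ω → ℤ/pℤ ∣ Σ_{ω∈Ω} v(ω) = 0} and Alt(Ω) acts on W by permuting coordinates. -/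
open Equiv

/-- The "sum of coordinates" homomorphism on `(ℤ/pℤ)^Ω` (written multiplicatively). -/
def sumHom (p : ℕ) (Ω : Type) [Fintype Ω] :
    (Ω → Multiplicative (ZMod p)) →* Multiplicative (ZMod p) where
  toFun v := ∏ ω, v ω
  map_one' := by simp
  map_mul' v w := by simp [Finset.prod_mul_distrib]

/-- `W = {v : Ω → ℤ/pℤ ∣ Σ_ω v(ω) = 0}`, written multiplicatively. -/
def Wsub (p : ℕ) (Ω : Type) [Fintype Ω] : Subgroup (Ω → Multiplicative (ZMod p)) :=
  (sumHom p Ω).ker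

/-- A permutation of `Ω` acts on `W` by permuting coordinates. -/
def WAut (p : ℕ) (Ω : Type) [Fintype Ω] : Equiv.Perm Ω →* MulAut (Wsub p Ω) where
  toFun σ :=
    { toFun := fun v => ⟨v.1 ∘ σ.symm, by
        have hv := v.2
        simp only [Wsub, sumHom, MonoidHom.mem_ker, MonoidHom.coe_mk, OneHom.coe_mk] at hv ⊢
        rw [← hv]
        exact Equiv.prod_comp σ.symm v.1⟩
      invFun := fun v => ⟨v.1 ∘ σ, by
        have hv := v.2
        simp only [Wsub, sumHom, MonoidHom.mem_ker, MonoidHom.coe_mk, OneHom.coe_mk] at hv ⊢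
        rw [← hv]
        exact Equiv.prod_comp σ v.1⟩
      left_inv := fun v => by
        apply Subtype.ext; funext ω; simp
      right_inv := fun v => by
        apply Subtype.ext; funext ω; simp
      map_mul' := fun v w => rfl }
  map_one' := by
    apply MulEquiv.ext; intro v; apply Subtype.ext; rfl
  map_mul' σ τ := by
    apply MulEquiv.ext; intro v; apply Subtype.ext; rfl

/-- The action of `Alt(Ω)` on `W` by permuting coordinates. -/
def altActW (p : ℕ) (Ω : Type) [Fintype Ω] [DecidableEq Ω] :
    alternatingGroup Ω →* MulAut (Wsub p Ω) :=
  (WAut p Ω).comp (alternatingGroup Ω).subtype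

/-!
Send `x ↦ (δ, π x)` and `y ↦ (1, π y)` with `δ = e_a - e_b`. The relation `x^p = 1` holds
because `π x` fixes `δ` and `W` has exponent `p`. For `t = π (xy)` the `W`-component of
`(δ, t)^r` is `∑_{i<r} t^i (e_a - e_{t^k a})`, which telescopes to `0` along the `t`-orbit of `a`
since `t^r = 1`.

For surjectivity, the image meets `W` in an `Alt(Ω)`-invariant subgroup `M`. As `p ∤ |Ω|`,
a nonzero `v ∈ M` is non-constant, and two commutators with double transpositions extract from
it a nonzero multiple of some `e_α - e_β`; `Alt(Ω)` is 2-transitive, so `M = W` unless `M = 0`.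
If `M = 0` the image is the graph of a crossed homomorphism `Alt(Ω) → W`; restricted to the
stabiliser `Alt(Ω ∖ {a})` and read off at `a` it becomes a homomorphism to `ℤ/p`, trivial since
`Alt(Ω ∖ {a})` is simple, yet its value at `π x` is `δ(a) = 1`.
-/

theorem Finset.prod_range_add_eq_of_periodic {M : Type*} [CommGroup M] {r : ℕ} (k : ℕ)
    {F : ℕ → M} (hF : Function.Periodic F r) :
    ∏ i ∈ Finset.range r, F (i + k) = ∏ i ∈ Finset.range r, F i := by
  induction k generalizing F with
  | zero => rfl
  | succ k ih =>
    have hshift : ∏ i ∈ Finset.range r, F (i + 1) = ∏ i ∈ Finset.range r, F i := by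
      have := (Finset.prod_range_succ' F r).symm.trans (Finset.prod_range_succ F r)
      rwa [hF.eq, mul_left_inj] at this
    have hF' : Function.Periodic (fun i => F (i + 1)) r := fun i =>
      show F (i + r + 1) = F (i + 1) by rw [add_right_comm, hF]
    simpa only [← add_assoc] using (ih hF').trans hshift

theorem Finset.exists_three_notMem {α : Type*} [Fintype α] [DecidableEq α] (s : Finset α)
    (h : s.card + 3 ≤ Fintype.card α) :
    ∃ a b c, a ∉ s ∧ b ∉ s ∧ c ∉ s ∧ a ≠ b ∧ a ≠ c ∧ b ≠ c := by
  obtain ⟨t, hts, ht⟩ := Finset.exists_subset_card_eq (s := sᶜ) (n := 3)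
    (by rw [Finset.card_compl]; omega)
  obtain ⟨a, b, c, hab, hac, hbc, rfl⟩ := Finset.card_eq_three.mp ht
  simp only [Finset.insert_subset_iff, Finset.singleton_subset_iff, Finset.mem_compl] at hts
  exact ⟨a, b, c, hts.1, hts.2.1, hts.2.2, hab, hac, hbc⟩

theorem ZMod.multiplicative_pow_self {p : ℕ} (x : Multiplicative (ZMod p)) : x ^ p = 1 :=
  ZModModule.char_nsmul_eq_zero (n := p) x.toAdd

theorem Equiv.Perm.swap_mul_swap_mem_alternatingGroup {α : Type*} [Fintype α] [DecidableEq α]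
    {a b c d : α} (hab : a ≠ b) (hcd : c ≠ d) : swap a b * swap c d ∈ alternatingGroup α :=
  Perm.mul_mem_alternatingGroup_of_isSwap ⟨a, b, hab, rfl⟩ ⟨c, d, hcd, rfl⟩

theorem alternatingGroup.monoidHom_eq_one {α A : Type*} [Fintype α] [DecidableEq α]
    [CommGroup A] (h5 : 5 ≤ Nat.card α) (χ : alternatingGroup α →* A) : χ = 1 := by
  have := alternatingGroup.isSimpleGroup h5
  rcases IsSimpleGroup.eq_bot_or_eq_top_of_normal χ.ker inferInstance with hbot | htop
  · have : IsMulCommutative (alternatingGroup α) :=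
      ⟨⟨fun x y => (MonoidHom.ker_eq_bot_iff χ).mp hbot (by rw [map_mul, map_mul, mul_comm])⟩⟩
    have := alternatingGroup.isMulCommutative_iff_card_le_three.mp this
    omega
  · exact MonoidHom.ker_eq_top_iff.mp htop

namespace Tri

variable {p q r : ℕ}

theorem gx_pow : gx p q r ^ p = 1 :=
  (map_pow _ _ _).symm.trans (PresentedGroup.one_of_mem (by simp [triRels]))

theorem gy_pow : gy p q r ^ q = 1 :=
  (map_pow _ _ _).symm.trans (PresentedGroup.one_of_mem (by simp [triRels]))

theorem gx_mul_gy_pow : (gx p q r * gy p q r) ^ r = 1 := by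
  rw [gx, gy, PresentedGroup.of, PresentedGroup.of, ← map_mul, ← map_pow]
  exact PresentedGroup.one_of_mem (by simp [triRels])

variable {G : Type*} [Group G]

def lift {x y : G} (hx : x ^ p = 1) (hy : y ^ q = 1) (hxy : (x * y) ^ r = 1) : Tri p q r →* G :=
  PresentedGroup.toGroup (f := ![x, y]) <| by
    simp only [triRels, Set.mem_insert_iff, Set.mem_singleton_iff]
    rintro w (rfl | rfl | rfl) <;> simpa

theorem lift_gx {x y : G} (hx : x ^ p = 1) (hy : y ^ q = 1) (hxy : (x * y) ^ r = 1) :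
    lift hx hy hxy (gx p q r) = x :=
  PresentedGroup.toGroup.of _

theorem lift_gy {x y : G} (hx : x ^ p = 1) (hy : y ^ q = 1) (hxy : (x * y) ^ r = 1) :
    lift hx hy hxy (gy p q r) = y :=
  PresentedGroup.toGroup.of _

theorem hom_ext {f g : Tri p q r →* G} (hx : f (gx p q r) = g (gx p q r))
    (hy : f (gy p q r) = g (gy p q r)) : f = g :=
  PresentedGroup.ext fun i => by fin_cases i <;> assumption

end Tri

namespace SemidirectProduct

variable {N G H : Type*} [CommGroup N] [Group G] [Group H] {φ : G →* MulAut N}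

theorem right_pow (x : N ⋊[φ] G) (n : ℕ) : (x ^ n).right = x.right ^ n :=
  map_pow rightHom x n

theorem left_pow (x : N ⋊[φ] G) (n : ℕ) :
    (x ^ n).left = ∏ i ∈ Finset.range n, φ (x.right ^ i) x.left := by
  induction n with
  | zero => rfl
  | succ n ih => rw [pow_succ, mul_left, ih, Finset.prod_range_succ, right_pow]

theorem mk_pow_eq_one {v : N} {g : G} {n : ℕ}
    (hv : ∏ i ∈ Finset.range n, φ (g ^ i) v = 1) (hg : g ^ n = 1) :
    (⟨v, g⟩ : N ⋊[φ] G) ^ n = 1 := by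
  ext
  · rw [left_pow]; exact hv
  · rw [right_pow]; exact hg

variable {f : H →* N ⋊[φ] G}

theorem aut_mem_comap_inl_range (hf : Function.Surjective (rightHom.comp f)) (g : G) {v : N}
    (hv : v ∈ f.range.comap inl) : φ g v ∈ f.range.comap inl := by
  obtain ⟨h, hh⟩ := hf g
  obtain ⟨w, hw⟩ := hv
  refine ⟨h * w * h⁻¹, ?_⟩
  rw [map_mul, map_mul, map_inv, hw]
  ext <;> simp [← show (f h).right = g from hh]

theorem surjective_of_comap_inl_range_eq_top (hf : Function.Surjective (rightHom.comp f))
    (htop : f.range.comap inl = ⊤) : Function.Surjective f := by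
  intro x
  obtain ⟨h, hh⟩ := hf x.right
  obtain ⟨w, hw⟩ : x.left * (f h).left⁻¹ ∈ f.range.comap inl := htop ▸ Subgroup.mem_top _
  refine ⟨w * h, ?_⟩
  ext
  · simp [hw]
  · simpa [hw] using hh

theorem exists_section_of_comap_inl_range_eq_bot (hf : Function.Surjective (rightHom.comp f))
    (hbot : f.range.comap inl = ⊥) :
    ∃ s : G →* N ⋊[φ] G, (∀ g, (s g).right = g) ∧ s.comp (rightHom.comp f) = f := by
  have hker : (rightHom.comp f).ker ≤ f.ker := by
    intro h hh
    have hinl : inl (f h).left = f h := by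
      ext
      · rfl
      · exact hh.symm
    have : (f h).left ∈ f.range.comap inl := ⟨h, hinl.symm⟩
    rw [hbot, Subgroup.mem_bot] at this
    rw [MonoidHom.mem_ker, ← hinl, this, map_one]
  set s := (rightHom.comp f).liftOfSurjective hf ⟨f, hker⟩
  have hs : s.comp (rightHom.comp f) = f := MonoidHom.liftOfRightInverse_comp _ _ _ _
  refine ⟨s, fun g => ?_, hs⟩
  obtain ⟨h, rfl⟩ := hf g
  exact congrArg (fun F : H →* N ⋊[φ] G => (F h).right) hs

end SemidirectProduct

namespace Wsub

variable {p : ℕ} {Ω : Type} [Fintype Ω]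

instance : CoeFun (Wsub p Ω) fun _ => Ω → Multiplicative (ZMod p) := ⟨Subtype.val⟩

theorem prod_apply_eq_one (v : Wsub p Ω) : ∏ ω, v ω = 1 := v.2

theorem pow_self_eq_one (v : Wsub p Ω) : v ^ p = 1 := by
  ext1; funext ω; exact ZMod.multiplicative_pow_self _

theorem exists_apply_ne_of_ne_one (hp : p.Prime) (hpΩ : ¬ p ∣ Fintype.card Ω) {v : Wsub p Ω}
    (hv : v ≠ 1) : ∃ α β, v α ≠ v β := by
  by_contra! hconst
  obtain ⟨ω₀⟩ : Nonempty Ω :=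
    Fintype.card_pos_iff.mp (Nat.pos_of_ne_zero fun h => hpΩ (h ▸ dvd_zero p))
  have hcard : v ω₀ ^ Fintype.card Ω = 1 := by
    rw [← prod_apply_eq_one v, ← Finset.card_univ, ← Finset.prod_const]
    exact Finset.prod_congr rfl fun ω _ => (hconst ω ω₀).symm
  have hcop : (Fintype.card Ω).Coprime p := Nat.coprime_comm.mp (hp.coprime_iff_not_dvd.mpr hpΩ)
  have h₀ : v ω₀ = 1 := by
    simpa [hcop] using pow_gcd_eq_one.mpr ⟨hcard, ZMod.multiplicative_pow_self (v ω₀)⟩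
  exact hv (by ext1; funext ω; rw [hconst ω ω₀, h₀]; rfl)

theorem div_WAut_apply (σ : Perm Ω) (v : Wsub p Ω) (ω : Ω) :
    (v / WAut p Ω σ v) ω = v ω / v (σ.symm ω) := rfl

theorem div_WAut_apply_of_apply_eq {σ : Perm Ω} (v : Wsub p Ω) {ω : Ω} (hω : σ ω = ω) :
    (v / WAut p Ω σ v) ω = 1 := by
  rw [div_WAut_apply, σ.symm_apply_eq.mpr hω.symm, div_self']

variable [DecidableEq Ω]

def diff (x : Multiplicative (ZMod p)) (α β : Ω) : Wsub p Ω :=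
  ⟨Pi.mulSingle α x / Pi.mulSingle β x, by simp [Wsub, sumHom, Finset.prod_div_distrib]⟩

theorem coe_diff (x : Multiplicative (ZMod p)) (α β : Ω) :
    (diff x α β : Ω → Multiplicative (ZMod p)) = Pi.mulSingle α x / Pi.mulSingle β x := rfl

theorem diff_self (x : Multiplicative (ZMod p)) (α : Ω) : diff x α α = 1 := by
  ext1; exact div_self' _

theorem diff_zpow (x : Multiplicative (ZMod p)) (α β : Ω) (n : ℤ) :
    diff x α β ^ n = diff (x ^ n) α β := by
  ext1
  simp [diff, div_zpow, Pi.mulSingle_zpow]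

theorem WAut_diff (σ : Perm Ω) (x : Multiplicative (ZMod p)) (α β : Ω) :
    WAut p Ω σ (diff x α β) = diff x (σ α) (σ β) := by
  ext1
  exact congrArg₂ (· / ·) (Pi.mulSingle_comp_equiv σ.symm α x) (Pi.mulSingle_comp_equiv σ.symm β x)

theorem prod_diff (v : Wsub p Ω) (β : Ω) : ∏ ω, diff (v ω) ω β = v := by
  ext1
  simp only [diff, Subgroup.val_finsetProd, Finset.prod_div_distrib, Finset.univ_prod_mulSingle]
  have : ∏ ω, Pi.mulSingle (M := fun _ => Multiplicative (ZMod p)) β (v ω) =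
      Pi.mulSingle β (∏ ω, v ω) :=
    (map_prod (MonoidHom.mulSingle (fun _ => Multiplicative (ZMod p)) β) _ _).symm
  rw [this, prod_apply_eq_one, Pi.mulSingle_one, div_one]

theorem div_WAut_swap_mul_swap {u : Wsub p Ω} {a z₁ z₂ z₃ : Ω} (ha₂ : a ≠ z₂) (ha₃ : a ≠ z₃)
    (h₁₂ : z₁ ≠ z₂) (h₁₃ : z₁ ≠ z₃) (hu₁ : u z₁ = 1) (hu₂ : u z₂ = 1) (hu₃ : u z₃ = 1) :
    u / WAut p Ω (swap a z₁ * swap z₂ z₃) u = diff (u a) a z₁ := by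
  ext ω
  rw [div_WAut_apply, coe_diff, ← Perm.inv_def, mul_inv_rev, swap_inv, swap_inv, Perm.mul_apply]
  simp only [swap_apply_def, Pi.div_apply, Pi.mulSingle_apply]
  split_ifs <;> simp_all

variable {M : Subgroup (Wsub p Ω)}

theorem exists_diff_mem_of_apply_ne (hΩ : 7 ≤ Fintype.card Ω)
    (hM : ∀ σ ∈ alternatingGroup Ω, ∀ v ∈ M, WAut p Ω σ v ∈ M) {v : Wsub p Ω} (hvM : v ∈ M)
    {a b : Ω} (hvab : v a ≠ v b) : ∃ x ≠ 1, ∃ z ≠ a, diff x a z ∈ M := by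
  have hab : a ≠ b := fun h => hvab (h ▸ rfl)
  obtain ⟨c, d, -, hc, hd, -, hcd, -⟩ :=
    Finset.exists_three_notMem {a, b} (by have := Finset.card_le_two (a := a) (b := b); omega)
  simp only [Finset.mem_insert, Finset.mem_singleton, not_or] at hc hd
  set u := v / WAut p Ω (swap a b * swap c d) v
  have huM : u ∈ M := M.div_mem hvM (hM _ (Perm.swap_mul_swap_mem_alternatingGroup hab hcd) v hvM)
  have hua : u a ≠ 1 := by
    rw [div_WAut_apply, ← Perm.inv_def, mul_inv_rev, swap_inv, swap_inv, Perm.mul_apply,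
      swap_apply_left, swap_apply_of_ne_of_ne (Ne.symm hc.2) (Ne.symm hd.2)]
    exact div_ne_one.mpr hvab
  have hu : ∀ z ∉ ({a, b, c, d} : Finset Ω), u z = 1 := by
    intro z hz
    simp only [Finset.mem_insert, Finset.mem_singleton, not_or] at hz
    refine div_WAut_apply_of_apply_eq v ?_
    rw [Perm.mul_apply, swap_apply_of_ne_of_ne hz.2.2.1 hz.2.2.2,
      swap_apply_of_ne_of_ne hz.1 hz.2.1]
  obtain ⟨z₁, z₂, z₃, h₁, h₂, h₃, h₁₂, h₁₃, h₂₃⟩ := Finset.exists_three_notMem {a, b, c, d}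
    (by have := Finset.card_le_four (a := a) (b := b) (c := c) (d := d); omega)
  refine ⟨u a, hua, z₁, by grind, ?_⟩
  rw [← div_WAut_swap_mul_swap (by grind) (by grind) h₁₂ h₁₃ (hu _ h₁) (hu _ h₂) (hu _ h₃)]
  exact M.div_mem huM (hM _ (Perm.swap_mul_swap_mem_alternatingGroup (by grind) h₂₃) u huM)

theorem diff_mem_of_diff_mem (hp : p.Prime) (hΩ : 4 ≤ Fintype.card Ω)
    (hM : ∀ σ ∈ alternatingGroup Ω, ∀ v ∈ M, WAut p Ω σ v ∈ M) {x : Multiplicative (ZMod p)}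
    (hx : x ≠ 1) {γ δ : Ω} (hγδ : γ ≠ δ) (hmem : diff x γ δ ∈ M)
    (y : Multiplicative (ZMod p)) (α β : Ω) : diff y α β ∈ M := by
  rcases eq_or_ne α β with rfl | hαβ
  · rw [diff_self]; exact M.one_mem
  have : MulAction.IsMultiplyPretransitive (alternatingGroup Ω) Ω 2 :=
    have := alternatingGroup.isMultiplyPretransitive Ω
    MulAction.isMultiplyPretransitive_of_le (n := Nat.card Ω - 2)
      (by rw [Nat.card_eq_fintype_card]; omega) (Nat.sub_le _ _)
  obtain ⟨σ, hσγ, hσδ⟩ := MulAction.is_two_pretransitive_iff.mp this hγδ hαβ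
  have hxαβ : diff x α β ∈ M := by
    rw [← hσγ, ← hσδ]
    exact WAut_diff (σ : Perm Ω) x γ δ ▸ hM σ σ.2 _ hmem
  have : Fact p.Prime := ⟨hp⟩
  obtain ⟨n, rfl⟩ := mem_zpowers_of_prime_card (p := p) (by simp) hx (g' := y)
  rw [← diff_zpow]
  exact M.zpow_mem hxαβ n

theorem eq_top_of_invariant (hp : p.Prime) (hpΩ : ¬ p ∣ Fintype.card Ω)
    (hΩ : 7 ≤ Fintype.card Ω) (hM : ∀ σ ∈ alternatingGroup Ω, ∀ v ∈ M, WAut p Ω σ v ∈ M)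
    (hne : M ≠ ⊥) : M = ⊤ := by
  obtain ⟨v, hvM, hv⟩ := M.bot_or_exists_ne_one.resolve_left hne
  obtain ⟨a, b, hvab⟩ := exists_apply_ne_of_ne_one hp hpΩ hv
  obtain ⟨x, hx, z, hza, hxM⟩ := exists_diff_mem_of_apply_ne hΩ hM hvM hvab
  refine eq_top_iff.mpr fun w _ => ?_
  rw [← prod_diff w a]
  exact M.prod_mem fun ω _ => diff_mem_of_diff_mem hp (by omega) hM hx hza.symm hxM _ _ _

theorem section_left_apply_eq_one (hΩ : 6 ≤ Fintype.card Ω)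
    (s : alternatingGroup Ω →* Wsub p Ω ⋊[altActW p Ω] alternatingGroup Ω)
    (hs : ∀ σ, (s σ).right = σ) {a : Ω} {σ : alternatingGroup Ω} (hσ : (σ : Perm Ω) a = a) :
    (s σ).left a = 1 := by
  set ι := alternatingGroup.ofSubtype ({a}ᶜ : Finset Ω)
  have hιa : ∀ e, (ι e : Perm Ω) a = a := fun e =>
    Perm.ofSubtype_apply_of_not_mem _ (by simp)
  let χ : alternatingGroup ({a}ᶜ : Finset Ω) →* Multiplicative (ZMod p) :=
    MonoidHom.mk' (fun e => (s (ι e)).left a) fun e₁ e₂ => by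
      rw [map_mul, map_mul, SemidirectProduct.mul_left, Subgroup.coe_mul, Pi.mul_apply, hs]
      exact congrArg _ (congrArg (s (ι e₂)).left ((ι e₁ : Perm Ω).symm_apply_eq.mpr (hιa e₁).symm))
  have hχ : χ = 1 := alternatingGroup.monoidHom_eq_one (by simp; omega) χ
  obtain ⟨e, rfl⟩ : σ ∈ ι.range := by
    rw [alternatingGroup.mem_range_ofSubtype_iff]
    intro x hx
    simp only [Finset.mem_compl, Finset.mem_singleton]
    rintro rfl
    exact Perm.mem_support.mp hx hσ
  exact DFunLike.congr_fun hχ e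

theorem surjective_of_left_apply_ne_one (hp : p.Prime) (hpΩ : ¬ p ∣ Fintype.card Ω)
    (hΩ : 7 ≤ Fintype.card Ω) {H : Type*} [Group H]
    {f : H →* Wsub p Ω ⋊[altActW p Ω] alternatingGroup Ω}
    (hf : Function.Surjective (SemidirectProduct.rightHom.comp f)) {x : H} {a : Ω}
    (hxa : ((f x).right : Perm Ω) a = a) (hx : (f x).left a ≠ 1) : Function.Surjective f := by
  refine SemidirectProduct.surjective_of_comap_inl_range_eq_top hf <|
    eq_top_of_invariant hp hpΩ hΩ
      (fun σ hσ _ hv => SemidirectProduct.aut_mem_comap_inl_range hf ⟨σ, hσ⟩ hv) fun hbot => ?_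
  obtain ⟨s, hs, hsf⟩ := SemidirectProduct.exists_section_of_comap_inl_range_eq_bot hf hbot
  have hsx : s (f x).right = f x := DFunLike.congr_fun hsf x
  exact hx (hsx ▸ section_left_apply_eq_one (by omega) s hs hxa)

theorem mk_diff_pow_eq_one_of_fixed {σ : alternatingGroup Ω} (hσ : σ ^ p = 1)
    (x : Multiplicative (ZMod p)) {a b : Ω} (ha : (σ : Perm Ω) a = a) (hb : (σ : Perm Ω) b = b) :
    (⟨diff x a b, σ⟩ : Wsub p Ω ⋊[altActW p Ω] alternatingGroup Ω) ^ p = 1 := by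
  refine SemidirectProduct.mk_pow_eq_one ?_ hσ
  have hfix : ∀ i : ℕ, altActW p Ω (σ ^ i) (diff x a b) = diff x a b := fun i => by
    rw [altActW, MonoidHom.comp_apply, Subgroup.coe_subtype, SubgroupClass.coe_pow, WAut_diff,
      Perm.pow_apply_eq_self_of_apply_eq_self ha, Perm.pow_apply_eq_self_of_apply_eq_self hb]
  simp only [hfix, Finset.prod_const, Finset.card_range, pow_self_eq_one]

theorem mk_diff_pow_eq_one_of_pow_eq_one {σ : alternatingGroup Ω} {r : ℕ} (hσ : σ ^ r = 1)
    (x : Multiplicative (ZMod p)) (a : Ω) (k : ℕ) :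
    (⟨diff x a (((σ : Perm Ω) ^ k) a), σ⟩ : Wsub p Ω ⋊[altActW p Ω] alternatingGroup Ω) ^ r =
      1 := by
  refine SemidirectProduct.mk_pow_eq_one ?_ hσ
  have hσ' : (σ : Perm Ω) ^ r = 1 := by rw [← SubgroupClass.coe_pow, hσ, OneMemClass.coe_one]
  set F : ℕ → Ω → Multiplicative (ZMod p) := fun i => Pi.mulSingle (((σ : Perm Ω) ^ i) a) x
  have hF : Function.Periodic F r := fun i => by simp only [F, pow_add, hσ', mul_one]
  simp only [altActW, MonoidHom.comp_apply, Subgroup.coe_subtype, SubgroupClass.coe_pow, WAut_diff,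
    ← Perm.mul_apply, ← pow_add]
  ext1
  simp only [Subgroup.val_finsetProd, coe_diff, Finset.prod_div_distrib]
  rw [Finset.prod_range_add_eq_of_periodic k hF, div_self', OneMemClass.coe_one]

end Wsub

theorem quotient_Cp_powers_semidirect_alternating_general
    (p q r k : ℕ) (hp : p.Prime)
    (Ω : Type) [Fintype Ω] [DecidableEq Ω]
    (hdeg : 6 < Fintype.card Ω)
    (hpdeg : ¬ p ∣ Fintype.card Ω)
    (π : Tri p q r →* Equiv.Perm Ω)
    (hrange : π.range = alternatingGroup Ω)
    (a b : Ω) (hab : a ≠ b)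
    (hax : π (gx p q r) a = a) (hbx : π (gx p q r) b = b)
    (hhandle : ((π (gx p q r * gy p q r)) ^ k) a = b) :
    ∃ f : Tri p q r →* (Wsub p Ω) ⋊[altActW p Ω] alternatingGroup Ω,
      Function.Surjective f := by
  have : Fact (1 < p) := ⟨hp.one_lt⟩
  set π₀ := π.codRestrict (alternatingGroup Ω) fun g => by rw [← hrange]; exact ⟨g, rfl⟩
  have hπ₀ : Function.Surjective π₀ := fun σ => by
    obtain ⟨g, hg⟩ : (σ : Perm Ω) ∈ π.range := by rw [hrange]; exact σ.2
    exact ⟨g, Subtype.ext hg⟩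
  have hpow : ∀ {g : Tri p q r} {n : ℕ}, g ^ n = 1 → π₀ g ^ n = 1 := fun h => by
    rw [← map_pow, h, map_one]
  set g : Multiplicative (ZMod p) := .ofAdd 1
  have hX := Wsub.mk_diff_pow_eq_one_of_fixed (hpow Tri.gx_pow) g hax hbx
  have hY : (SemidirectProduct.inr (π₀ (gy p q r)) : Wsub p Ω ⋊[altActW p Ω] _) ^ q = 1 := by
    rw [← map_pow, hpow Tri.gy_pow, map_one]
  have hXY : ((⟨Wsub.diff g a b, π₀ (gx p q r)⟩ : Wsub p Ω ⋊[altActW p Ω] alternatingGroup Ω) *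
      SemidirectProduct.inr (π₀ (gy p q r))) ^ r = 1 := by
    convert Wsub.mk_diff_pow_eq_one_of_pow_eq_one (hpow Tri.gx_mul_gy_pow) g a k using 2
    ext
    · simp [π₀, ← hhandle]
    · simp
  set f := Tri.lift hX hY hXY
  have hf : SemidirectProduct.rightHom.comp f = π₀ :=
    Tri.hom_ext (by simp [f, Tri.lift_gx]) (by simp [f, Tri.lift_gy])
  refine ⟨f, Wsub.surjective_of_left_apply_ne_one hp hpdeg (by omega) (hf ▸ hπ₀)
    (x := gx p q r) (a := a) ?_ ?_⟩
  · rw [Tri.lift_gx]; exact hax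
  · simp [f, Tri.lift_gx, Wsub.coe_diff, hab, g]

theorem quotient_Cp_powers_semidirect_alternating
    (p q r k : ℕ) (hp : p.Prime) (hpq : p ≤ q) (hqr : q ≤ r) (hk : 0 < k)
    (Ω : Type) [Fintype Ω] [DecidableEq Ω]
    (hdeg : 6 < Fintype.card Ω)
    (hpqr : ¬ p ∣ q * r) (hpdeg : ¬ p ∣ Fintype.card Ω)
    (π : Tri p q r →* Equiv.Perm Ω)
    (hrange : π.range = alternatingGroup Ω)
    (a b : Ω) (hab : a ≠ b)
    (hax : π (gx p q r) a = a) (hbx : π (gx p q r) b = b)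
    (hhandle : ((π (gx p q r * gy p q r)) ^ k) a = b)
    (hks : k < Nat.card {w : Ω | ∃ n : ℤ, ((π (gx p q r * gy p q r)) ^ n) a = w}) :
    ∃ f : Tri p q r →* (Wsub p Ω) ⋊[altActW p Ω] alternatingGroup Ω,
      Function.Surjective f :=
  quotient_Cp_powers_semidirect_alternating_general p q r k hp Ω hdeg hpdeg π hrange a b hab hax hbx
    hhandle
end
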